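/- arXiv:2210.12514 — 12 statements merged into one kernel-verified Lean document; each statement's English description precedes it below -/
import Mathlib

section
/- For every α ∈ (0,1), the equation 1/α + (1+1/α)r − r^{2−α/2} = 0 has a unique root r* in (0,∞); moreover r* > 1. -/
/-- For every α ∈ (0,1), the equation 1/α + (1+1/α)r − r^{2−α/2} = 0 has a unique
root r* in (0,∞); moreover r* > 1. -/
theorem stmt_0 (α : ℝ) (hα : α ∈ Set.Ioo (0:ℝ) 1) :
    (∃! r : ℝ, 0 < r ∧ 1/α + (1 + 1/α) * r - r ^ (2 - α/2) = 0) ∧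
    (∀ r : ℝ, 0 < r → 1/α + (1 + 1/α) * r - r ^ (2 - α/2) = 0 → 1 < r) := by
  obtain ⟨hα0, hα1⟩ := hα
  set p : ℝ := 2 - α/2 with hp
  have hp32 : (3:ℝ)/2 ≤ p := by rw [hp]; linarith
  have hp1 : (1:ℝ) < p := lt_of_lt_of_le (by norm_num) hp32
  have hαinv : 0 < 1/α := by positivity
  -- Any positive root is > 1.
  have hgt1 : ∀ r : ℝ, 0 < r → 1/α + (1 + 1/α) * r - r ^ p = 0 → 1 < r := by
    intro r hr hroot
    by_contra h
    push_neg at h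
    have h1 : r ^ p ≤ r ^ (1:ℝ) :=
      Real.rpow_le_rpow_of_exponent_ge hr h (le_of_lt hp1)
    rw [Real.rpow_one] at h1
    have : 0 < 1/α + (1 + 1/α) * r - r ^ p := by
      have : 0 < (1/α) * r := by positivity
      nlinarith
    linarith
  -- continuity of the function on positives
  have hcont : ∀ a b : ℝ, 0 < a → ContinuousOn
      (fun r : ℝ => 1/α + (1 + 1/α) * r - r ^ p) (Set.Icc a b) := by
    intro a b ha
    apply ContinuousOn.sub
    · exact (continuous_const.add (continuous_const.mul continuous_id)).continuousOn
    · intro x hx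
      exact (Real.continuousAt_rpow_const x p (Or.inl (by
        have := hx.1; intro h; rw [h] at this; linarith))).continuousWithinAt
  -- existence
  set R : ℝ := (4/α)^2 with hR
  have h4α : (1:ℝ) < 4/α := by
    rw [lt_div_iff₀ hα0]; linarith
  have hR1 : (1:ℝ) ≤ R := by nlinarith
  have hf1 : 0 < 1/α + (1 + 1/α) * 1 - (1:ℝ) ^ p := by
    rw [Real.one_rpow]; linarith
  have hfR : 1/α + (1 + 1/α) * R - R ^ p < 0 := by
    have h0 : (0:ℝ) ≤ 4/α := by positivity
    have h1 : R ^ ((3:ℝ)/2) ≤ R ^ p :=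
      Real.rpow_le_rpow_of_exponent_le hR1 hp32
    have h2 : R ^ ((3:ℝ)/2) = (4/α)^3 := by
      rw [hR, ← Real.rpow_natCast (4/α) 2, ← Real.rpow_mul h0]
      norm_num
    have key : 1/α + (1 + 1/α) * R < (4/α)^3 := by
      rw [hR, ← sub_pos]
      have heq : (4/α)^3 - (1/α + (1 + 1/α) * (4/α)^2) = (64 - (α^2 + 16*α + 16))/α^3 := by
        field_simp
        ring
      rw [heq]
      apply div_pos _ (by positivity)
      nlinarith
    linarith [h1, key, h2.symm.le]
  obtain ⟨r, hrmem, hr0⟩ := intermediate_value_Icc' hR1 (hcont 1 R one_pos)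
    (Set.mem_Icc.mpr ⟨le_of_lt hfR, le_of_lt hf1⟩)
  have hrpos : 0 < r := lt_of_lt_of_le one_pos hrmem.1
  refine ⟨⟨r, ⟨hrpos, hr0⟩, ?_⟩, hgt1⟩
  -- uniqueness via strict convexity
  have uniq : ∀ a b : ℝ, 0 < a → 0 < b → a < b →
      1/α + (1 + 1/α) * a - a ^ p = 0 → 1/α + (1 + 1/α) * b - b ^ p = 0 → False := by
    intro a b ha hb hab hfa hfb
    have hsc := strictConvexOn_rpow hp1
    set s : ℝ := a / b with hs
    set t : ℝ := 1 - a / b with ht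
    have hs0 : 0 < s := by positivity
    have hs1 : s < 1 := by rw [hs, div_lt_one hb]; exact hab
    have ht0 : 0 < t := by rw [ht]; linarith [hs1]
    have hts : t + s = 1 := by rw [ht, hs]; ring
    have h0mem : (0:ℝ) ∈ Set.Ici (0:ℝ) := Set.mem_Ici.mpr le_rfl
    have hbmem : b ∈ Set.Ici (0:ℝ) := Set.mem_Ici.mpr hb.le
    have hne : (0:ℝ) ≠ b := (ne_of_lt hb)
    have hkey := hsc.2 h0mem hbmem hne ht0 hs0 hts
    simp only [smul_eq_mul, mul_zero, zero_add] at hkey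
    have hsb : s * b = a := by rw [hs]; field_simp
    rw [hsb] at hkey
    have hz : (0:ℝ) ^ p = 0 := Real.zero_rpow (by positivity)
    rw [hz, mul_zero, zero_add] at hkey
    -- hkey : a ^ p < s * b ^ p
    have hap : a ^ p = 1/α + (1 + 1/α) * a := by linarith
    have hbp : b ^ p = 1/α + (1 + 1/α) * b := by linarith
    rw [hap, hbp] at hkey
    have : s * (1/α + (1 + 1/α) * b) = s * (1/α) + (1 + 1/α) * a := by
      rw [← hsb]; ring
    rw [this] at hkey
    have : 1/α < s * (1/α) := by linarith
    nlinarith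
  rintro y ⟨hy0, hy⟩
  rcases lt_trichotomy y r with h | h | h
  · exact absurd (uniq y r hy0 hrpos h hy hr0) id
  · exact h
  · exact absurd (uniq r y hrpos hy0 h hr0 hy) id
end

section
/- Let α ∈ (0,1) and let r* = r*(α) be the unique positive root of 1/α + (1+1/α)r − r^{2−α/2} = 0. Then for all x, y with 0 ≤ x < r* and 0 ≤ y < r*, one has g(x,y,α) := (2 + 2(1+α)x − α x^{2−α/2})/(1+x) − α y^{2−α/2}/(1+y) > 0. -/
/-- Chord bound: for `0 ≤ t ≤ r`, `1 ≤ p`, we have `t ^ p * r ≤ t * r ^ p`. -/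
lemma chord_bound (t r p : ℝ) (ht0 : 0 ≤ t) (htr : t ≤ r) (hr : 0 < r) (hp : 1 ≤ p) :
    t ^ p * r ≤ t * r ^ p := by
  rcases eq_or_lt_of_le ht0 with h0 | h0
  · rw [← h0, Real.zero_rpow (by linarith), zero_mul, zero_mul]
  · have h1 : t ^ p = t * t ^ (p - 1) := by
      rw [← Real.rpow_one_add' (le_of_lt h0) (by intro h; linarith)]
      ring_nf
    have h2 : r ^ p = r * r ^ (p - 1) := by
      rw [← Real.rpow_one_add' (le_of_lt hr) (by intro h; linarith)]
      ring_nf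
    have h3 : t ^ (p - 1) ≤ r ^ (p - 1) :=
      Real.rpow_le_rpow (le_of_lt h0) htr (by linarith)
    calc t ^ p * r = t * r * t ^ (p-1) := by rw [h1]; ring
      _ ≤ t * r * r ^ (p-1) := by
          apply mul_le_mul_of_nonneg_left h3
          positivity
      _ = t * r ^ p := by rw [h2]; ring

/-- If r* is the unique positive root of g₁(z,α) := 1/α + (1+1/α)z − z^{2−α/2},
then g(x,y,α) := (2 + 2(1+α)x − α x^{2−α/2})/(1+x) − α y^{2−α/2}/(1+y) > 0
for all 0 ≤ x, y < r*. -/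
theorem stmt_2 (α rstar : ℝ) (hα : α ∈ Set.Ioo (0:ℝ) 1)
    (hr : 0 < rstar)
    (hroot : 1/α + (1 + 1/α) * rstar - rstar ^ (2 - α/2) = 0)
    (x y : ℝ) (hx0 : 0 ≤ x) (hx : x < rstar) (hy0 : 0 ≤ y) (hy : y < rstar) :
    0 < (2 + 2 * (1 + α) * x - α * x ^ (2 - α/2)) / (1 + x)
        - α * y ^ (2 - α/2) / (1 + y) := by
  obtain ⟨hα0, hα1⟩ := hα
  set p : ℝ := 2 - α/2 with hp
  have hp1 : 1 ≤ p := by simp only [hp]; linarith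
  have hαne : α ≠ 0 := ne_of_gt hα0
  -- α * rstar ^ p = 1 + (1+α) * rstar
  have hkey : α * rstar ^ p = 1 + (1 + α) * rstar := by
    have h := hroot
    field_simp at h
    nlinarith [h]
  have h1x : (0:ℝ) < 1 + x := by linarith
  have h1y : (0:ℝ) < 1 + y := by linarith
  have h1r : (0:ℝ) < 1 + rstar := by linarith
  -- chord bounds
  have hcx : x ^ p * rstar ≤ x * rstar ^ p :=
    chord_bound x rstar p hx0 (le_of_lt hx) hr hp1
  have hcy : y ^ p * rstar ≤ y * rstar ^ p :=
    chord_bound y rstar p hy0 (le_of_lt hy) hr hp1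
  have hAx : α * x ^ p * rstar ≤ x * (1 + (1 + α) * rstar) := by
    calc α * x ^ p * rstar = α * (x ^ p * rstar) := by ring
      _ ≤ α * (x * rstar ^ p) := by
          exact mul_le_mul_of_nonneg_left hcx (le_of_lt hα0)
      _ = x * (α * rstar ^ p) := by ring
      _ = x * (1 + (1 + α) * rstar) := by rw [hkey]
  have hAy : α * y ^ p * rstar ≤ y * (1 + (1 + α) * rstar) := by
    calc α * y ^ p * rstar = α * (y ^ p * rstar) := by ring
      _ ≤ α * (y * rstar ^ p) := by
          exact mul_le_mul_of_nonneg_left hcy (le_of_lt hα0)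
      _ = y * (α * rstar ^ p) := by ring
      _ = y * (1 + (1 + α) * rstar) := by rw [hkey]
  have hM : (0:ℝ) < 1 + (1 + α) * rstar := by nlinarith
  -- second term bound
  have hyp0 : 0 ≤ y ^ p := Real.rpow_nonneg hy0 p
  have hy2 : α * y ^ p ≤ 1 + (1 + α) * rstar := by
    nlinarith [hAy, mul_lt_mul_of_pos_right hy hM]
  have hsec : α * y ^ p / (1 + y) ≤ (1 + (1 + α) * rstar) / (1 + rstar) := by
    rw [div_le_div_iff₀ h1y h1r]
    nlinarith [hAy, hy2]
  -- first term bound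
  have hfst : (1 + (1 + α) * rstar) / (1 + rstar)
      < (2 + 2 * (1 + α) * x - α * x ^ p) / (1 + x) := by
    rw [div_lt_div_iff₀ h1r h1x]
    -- multiply everything through rstar; use hAx and x < rstar
    have hgoal : (1 + (1 + α) * rstar) * (1 + x) * rstar
        < (2 + 2 * (1 + α) * x - α * x ^ p) * (1 + rstar) * rstar := by
      nlinarith [hAx, mul_nonneg (mul_nonneg (by linarith : (0:ℝ) ≤ 1 - α) hr.le)
        (by linarith : (0:ℝ) ≤ rstar - x), mul_pos h1r hr]
    nlinarith [hgoal, hr]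
  linarith [hsec, hfst]
end

section
/- Fix n ≥ 2 and positive real kernels χ₀^{(n)}, …, χ_{n−1}^{(n)} and χ₀^{(n−1)}, …, χ_{n−2}^{(n−1)}. Define a₀^{(m)} := (2−σ)χ₀^{(m)} and a_{m−j}^{(m)} := χ_{m−j}^{(m)} for 1 ≤ j ≤ m−1, for a constant σ ∈ [0,2). Then for any real sequence w₁,…,w_n, the identity 2 w_n ∑_{j=1}^n χ_{n−j}^{(n)} w_j = Y_n − Y_{n−1} + σ χ₀^{(n)} w_n² + Y_R holds, where Y_m := ∑_{j=1}^{m−1}(a_{m−j−1}^{(m)} − a_{m−j}^{(m)})(∑_{ℓ=j+1}^m w_ℓ)² + a_{m−1}^{(m)}(∑_{ℓ=1}^m w_ℓ)² and Y_R := ∑_{j=1}^{n−2}(a_{n−2−j}^{(n−1)} − a_{n−1−j}^{(n−1)} − a_{n−j−1}^{(n)} + a_{n−j}^{(n)})(∑_{ℓ=j+1}^{n−1} w_ℓ)² + (a_{n−2}^{(n−1)} − a_{n−1}^{(n)})(∑_{ℓ=1}^{n−1} w_ℓ)². -/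
open Finset

/-- modified kernels: a₀^{(m)} := (2−σ)χ₀^{(m)}, a_j^{(m)} := χ_j^{(m)} for j ≥ 1 -/
noncomputable def modKer (σ : ℝ) (χ : ℕ → ℕ → ℝ) (m j : ℕ) : ℝ :=
  if j = 0 then (2 - σ) * χ m 0 else χ m j

/-- the quadratic functional Y_m -/
noncomputable def Yfun (σ : ℝ) (χ : ℕ → ℕ → ℝ) (w : ℕ → ℝ) (m : ℕ) : ℝ :=
  ∑ j ∈ Finset.Icc 1 (m - 1),
    (modKer σ χ m (m - j - 1) - modKer σ χ m (m - j)) * (∑ ℓ ∈ Finset.Icc (j+1) m, w ℓ)^2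
  + modKer σ χ m (m - 1) * (∑ ℓ ∈ Finset.Icc 1 m, w ℓ)^2

/-- the remainder functional Y_R at level n -/
noncomputable def YRfun (σ : ℝ) (χ : ℕ → ℕ → ℝ) (w : ℕ → ℝ) (n : ℕ) : ℝ :=
  ∑ j ∈ Finset.Icc 1 (n - 2),
    (modKer σ χ (n-1) (n - 2 - j) - modKer σ χ (n-1) (n - 1 - j)
      - modKer σ χ n (n - j - 1) + modKer σ χ n (n - j))
      * (∑ ℓ ∈ Finset.Icc (j+1) (n-1), w ℓ)^2
  + (modKer σ χ (n-1) (n - 2) - modKer σ χ n (n - 1)) * (∑ ℓ ∈ Finset.Icc 1 (n-1), w ℓ)^2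



private lemma tele_aux : ∀ (M : ℕ) (a : ℕ → ℝ),
    ∑ j ∈ Finset.Icc 1 M, (a (M - j) - a (M + 1 - j)) = a 0 - a M
  | 0, a => by simp
  | (M+1), a => by
    rw [Finset.sum_Icc_succ_top (by omega : (1:ℕ) ≤ M+1)]
    have h := tele_aux M (fun k => a (k+1))
    have h2 : ∑ j ∈ Finset.Icc 1 M, (a (M+1-j) - a (M+1+1-j))
        = ∑ j ∈ Finset.Icc 1 M, (a ((M-j)+1) - a ((M+1-j)+1)) := by
      refine Finset.sum_congr rfl fun j hj => ?_
      simp only [Finset.mem_Icc] at hj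
      congr 2 <;> omega
    rw [h2, h]
    simp

private lemma abel_aux (w : ℕ → ℝ) : ∀ (M : ℕ) (a : ℕ → ℝ),
    ∑ j ∈ Finset.Icc 1 (M+1), a (M+1-j) * w j
      = ∑ j ∈ Finset.Icc 1 M, (a (M-j) - a (M+1-j)) * (∑ ℓ ∈ Finset.Icc (j+1) (M+1), w ℓ)
        + a M * (∑ ℓ ∈ Finset.Icc 1 (M+1), w ℓ)
  | 0, a => by simp
  | (M+1), a => by
    have ih := abel_aux w M (fun k => a (k+1))
    have e1 : ∑ j ∈ Finset.Icc 1 (M+1+1), a (M+1+1-j) * w j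
        = ∑ j ∈ Finset.Icc 1 (M+1), a ((M+1-j)+1) * w j + a 0 * w (M+2) := by
      rw [Finset.sum_Icc_succ_top (by omega : (1:ℕ) ≤ M+2)]
      norm_num
      refine Finset.sum_congr rfl fun j hj => ?_
      simp only [Finset.mem_Icc] at hj
      congr 2
      omega
    have esplit : ∑ j ∈ Finset.Icc 1 (M+1), (a (M+1-j) - a (M+1+1-j)) * (∑ ℓ ∈ Finset.Icc (j+1) (M+1+1), w ℓ)
        = (∑ j ∈ Finset.Icc 1 M, ((a ((M-j)+1) - a ((M+1-j)+1)) * ((∑ ℓ ∈ Finset.Icc (j+1) (M+1), w ℓ) + w (M+2))))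
          + (a 0 - a 1) * w (M+2) := by
      rw [Finset.sum_Icc_succ_top (by omega : (1:ℕ) ≤ M+1)]
      congr 1
      · refine Finset.sum_congr rfl fun j hj => ?_
        simp only [Finset.mem_Icc] at hj
        rw [Finset.sum_Icc_succ_top (by omega : j+1 ≤ M+2)]
        congr 3 <;> omega
      · have : ∑ ℓ ∈ Finset.Icc (M+1+1) (M+1+1), w ℓ = w (M+2) := by simp
        rw [this]
        congr 3 <;> omega
    have e4 : ∑ j ∈ Finset.Icc 1 M, ((a ((M-j)+1) - a ((M+1-j)+1)) * ((∑ ℓ ∈ Finset.Icc (j+1) (M+1), w ℓ) + w (M+2)))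
        = (∑ j ∈ Finset.Icc 1 M, (a ((M-j)+1) - a ((M+1-j)+1)) * (∑ ℓ ∈ Finset.Icc (j+1) (M+1), w ℓ))
          + (∑ j ∈ Finset.Icc 1 M, (a ((M-j)+1) - a ((M+1-j)+1))) * w (M+2) := by
      rw [Finset.sum_mul, ← Finset.sum_add_distrib]
      exact Finset.sum_congr rfl fun j hj => by ring
    have etele := tele_aux M (fun k => a (k+1))
    have e5 : ∑ ℓ ∈ Finset.Icc 1 (M+1+1), w ℓ = (∑ ℓ ∈ Finset.Icc 1 (M+1), w ℓ) + w (M+2) := by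
      rw [Finset.sum_Icc_succ_top (by omega : (1:ℕ) ≤ M+2)]
    rw [e1, ih, esplit, e4, etele, e5]
    ring

/-- Lemma 2.4 identity: for n ≥ 2, positive kernels χ^{(n)}, χ^{(n−1)} and σ ∈ [0,2),
2 wₙ ∑_{j=1}^n χ_{n−j}^{(n)} w_j = Y_n − Y_{n−1} + σ χ₀^{(n)} wₙ² + Y_R. -/
theorem stmt_5 (n : ℕ) (hn : 2 ≤ n) (σ : ℝ) (hσ0 : 0 ≤ σ) (hσ2 : σ < 2)
    (χ : ℕ → ℕ → ℝ)
    (hχn : ∀ j, j ≤ n - 1 → 0 < χ n j)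
    (hχn1 : ∀ j, j ≤ n - 2 → 0 < χ (n-1) j)
    (w : ℕ → ℝ) :
    2 * w n * ∑ j ∈ Finset.Icc 1 n, χ n (n - j) * w j
      = Yfun σ χ w n - Yfun σ χ w (n-1) + σ * χ n 0 * (w n)^2 + YRfun σ χ w n := by
  obtain ⟨m, rfl⟩ : ∃ m, n = m + 2 := ⟨n - 2, by omega⟩
  clear hn hσ0 hσ2 hχn hχn1
  simp only [Yfun, YRfun, show m+2-1 = m+1 from rfl, show m+2-2 = m from rfl,
    show m+1-1 = m from rfl,
    show ∀ j : ℕ, m+2-j-1 = m+1-j from fun j => by omega,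
    show ∀ j : ℕ, m+1-j-1 = m-j from fun j => by omega]
  -- step 1 : peel off the j = m+2 term of the LHS sum and convert χ to modKer
  have s1 : ∑ j ∈ Finset.Icc 1 (m+2), χ (m+2) (m+2-j) * w j
      = (∑ j ∈ Finset.Icc 1 (m+1), modKer σ χ (m+2) (m+2-j) * w j) + χ (m+2) 0 * w (m+2) := by
    rw [Finset.sum_Icc_succ_top (show 1 ≤ m+2 by omega)]
    congr 1
    · refine Finset.sum_congr rfl fun j hj => ?_
      simp only [Finset.mem_Icc] at hj
      unfold modKer
      rw [if_neg (by omega)]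
    · simp
  -- step 2 : Abel summation
  have habel := abel_aux w (m+1) (modKer σ χ (m+2))
  simp only [show m+1+1 = m+2 from rfl] at habel
  rw [Finset.sum_Icc_succ_top (show 1 ≤ m+2 by omega)] at habel
  simp only [Nat.sub_self] at habel
  have hsum : ∑ j ∈ Finset.Icc 1 (m+1), modKer σ χ (m+2) (m+2-j) * w j
      = (∑ j ∈ Finset.Icc 1 (m+1),
          (modKer σ χ (m+2) (m+1-j) - modKer σ χ (m+2) (m+2-j)) * (∑ ℓ ∈ Finset.Icc (j+1) (m+2), w ℓ))
        + modKer σ χ (m+2) (m+1) * (∑ ℓ ∈ Finset.Icc 1 (m+2), w ℓ)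
        - modKer σ χ (m+2) 0 * w (m+2) := by
    rw [eq_sub_iff_add_eq]
    exact habel
  -- step 3 : split off the top term of the abel sum and expand the inner sums
  have hsplit : ∑ j ∈ Finset.Icc 1 (m+1),
        (modKer σ χ (m+2) (m+1-j) - modKer σ χ (m+2) (m+2-j)) * (∑ ℓ ∈ Finset.Icc (j+1) (m+2), w ℓ)
      = (∑ j ∈ Finset.Icc 1 m,
            (modKer σ χ (m+2) (m+1-j) - modKer σ χ (m+2) (m+2-j)) * (∑ ℓ ∈ Finset.Icc (j+1) (m+1), w ℓ))
        + (∑ j ∈ Finset.Icc 1 m, (modKer σ χ (m+2) (m+1-j) - modKer σ χ (m+2) (m+2-j))) * w (m+2)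
        + (modKer σ χ (m+2) 0 - modKer σ χ (m+2) 1) * w (m+2) := by
    rw [Finset.sum_Icc_succ_top (show 1 ≤ m+1 by omega)]
    have e1 : ∀ j ∈ Finset.Icc 1 m,
        (modKer σ χ (m+2) (m+1-j) - modKer σ χ (m+2) (m+2-j)) * (∑ ℓ ∈ Finset.Icc (j+1) (m+2), w ℓ)
        = (modKer σ χ (m+2) (m+1-j) - modKer σ χ (m+2) (m+2-j)) * (∑ ℓ ∈ Finset.Icc (j+1) (m+1), w ℓ)
          + (modKer σ χ (m+2) (m+1-j) - modKer σ χ (m+2) (m+2-j)) * w (m+2) := by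
      intro j hj
      simp only [Finset.mem_Icc] at hj
      rw [Finset.sum_Icc_succ_top (show j+1 ≤ m+2 by omega)]
      ring
    rw [Finset.sum_congr rfl e1, Finset.sum_add_distrib, ← Finset.sum_mul]
    have e2 : m+1-(m+1) = 0 := by omega
    have e3 : m+2-(m+1) = 1 := by omega
    have e4 : ∑ ℓ ∈ Finset.Icc (m+1+1) (m+2), w ℓ = w (m+2) := by simp
    rw [e2, e3, e4]
  -- step 4 : expand the quadratic sum of Y_{m+2}
  have hY : ∑ j ∈ Finset.Icc 1 (m+1),
        (modKer σ χ (m+2) (m+1-j) - modKer σ χ (m+2) (m+2-j)) * (∑ ℓ ∈ Finset.Icc (j+1) (m+2), w ℓ)^2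
      = (∑ j ∈ Finset.Icc 1 m,
            (modKer σ χ (m+2) (m+1-j) - modKer σ χ (m+2) (m+2-j)) * (∑ ℓ ∈ Finset.Icc (j+1) (m+1), w ℓ)^2)
        + 2 * w (m+2) * (∑ j ∈ Finset.Icc 1 m,
            (modKer σ χ (m+2) (m+1-j) - modKer σ χ (m+2) (m+2-j)) * (∑ ℓ ∈ Finset.Icc (j+1) (m+1), w ℓ))
        + w (m+2)^2 * (∑ j ∈ Finset.Icc 1 m, (modKer σ χ (m+2) (m+1-j) - modKer σ χ (m+2) (m+2-j)))
        + (modKer σ χ (m+2) 0 - modKer σ χ (m+2) 1) * w (m+2)^2 := by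
    rw [Finset.sum_Icc_succ_top (show 1 ≤ m+1 by omega)]
    have e1 : ∀ j ∈ Finset.Icc 1 m,
        (modKer σ χ (m+2) (m+1-j) - modKer σ χ (m+2) (m+2-j)) * (∑ ℓ ∈ Finset.Icc (j+1) (m+2), w ℓ)^2
        = (modKer σ χ (m+2) (m+1-j) - modKer σ χ (m+2) (m+2-j)) * (∑ ℓ ∈ Finset.Icc (j+1) (m+1), w ℓ)^2
          + 2 * w (m+2) * ((modKer σ χ (m+2) (m+1-j) - modKer σ χ (m+2) (m+2-j)) * (∑ ℓ ∈ Finset.Icc (j+1) (m+1), w ℓ))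
          + w (m+2)^2 * (modKer σ χ (m+2) (m+1-j) - modKer σ χ (m+2) (m+2-j)) := by
      intro j hj
      simp only [Finset.mem_Icc] at hj
      rw [Finset.sum_Icc_succ_top (show j+1 ≤ m+2 by omega)]
      ring
    rw [Finset.sum_congr rfl e1, Finset.sum_add_distrib, Finset.sum_add_distrib,
      ← Finset.mul_sum, ← Finset.mul_sum]
    have e2 : m+1-(m+1) = 0 := by omega
    have e3 : m+2-(m+1) = 1 := by omega
    have e4 : ∑ ℓ ∈ Finset.Icc (m+1+1) (m+2), w ℓ = w (m+2) := by simp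
    rw [e2, e3, e4]
  -- step 5 : split the remainder sum
  have hYR : ∑ j ∈ Finset.Icc 1 m,
        (modKer σ χ (m+1) (m-j) - modKer σ χ (m+1) (m+1-j)
          - modKer σ χ (m+2) (m+1-j) + modKer σ χ (m+2) (m+2-j)) * (∑ ℓ ∈ Finset.Icc (j+1) (m+1), w ℓ)^2
      = (∑ j ∈ Finset.Icc 1 m,
            (modKer σ χ (m+1) (m-j) - modKer σ χ (m+1) (m+1-j)) * (∑ ℓ ∈ Finset.Icc (j+1) (m+1), w ℓ)^2)
        - (∑ j ∈ Finset.Icc 1 m,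
            (modKer σ χ (m+2) (m+1-j) - modKer σ χ (m+2) (m+2-j)) * (∑ ℓ ∈ Finset.Icc (j+1) (m+1), w ℓ)^2) := by
    rw [← Finset.sum_sub_distrib]
    exact Finset.sum_congr rfl fun j _ => by ring
  -- step 6 : telescoping
  have htele : (∑ j ∈ Finset.Icc 1 m, (modKer σ χ (m+2) (m+1-j) - modKer σ χ (m+2) (m+2-j)))
      = modKer σ χ (m+2) 1 - modKer σ χ (m+2) (m+1) := by
    have h := tele_aux m (fun k => modKer σ χ (m+2) (k+1))
    rw [← h]
    refine Finset.sum_congr rfl fun j hj => ?_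
    simp only [Finset.mem_Icc] at hj
    congr 2 <;> omega
  have hS0 : ∑ ℓ ∈ Finset.Icc 1 (m+2), w ℓ = (∑ ℓ ∈ Finset.Icc 1 (m+1), w ℓ) + w (m+2) :=
    Finset.sum_Icc_succ_top (show 1 ≤ m+2 by omega) w
  have hA0 : modKer σ χ (m+2) 0 = (2-σ) * χ (m+2) 0 := by simp [modKer]
  rw [s1, hsum, hsplit, hY, hYR, hS0, htele, hA0]
  ring
end

section
/- Under the hypotheses of the previous identity, if in addition the modified kernels satisfy row decrease (a_{n−j−1}^{(n)} ≥ a_{n−j}^{(n)} > 0 for 1 ≤ j ≤ n−1), column decrease (a_{n−1−j}^{(n−1)} ≥ a_{n−j}^{(n)} for 1 ≤ j ≤ n−1), and algebraic convexity (a_{n−2−j}^{(n−1)} − a_{n−1−j}^{(n−1)} ≥ a_{n−1−j}^{(n)} − a_{n−j}^{(n)} for 1 ≤ j ≤ n−2) for all applicable n, then the kernels are positive definite: 2∑_{k=1}^n w_k ∑_{j=1}^k χ_{k−j}^{(k)} w_j ≥ Y_n + σ ∑_{k=1}^n χ₀^{(k)} w_k² for all n ≥ 1 and real w₁,…,w_n.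 -/
open Finset

/-- telescoping sum over `Icc 1 n` -/
lemma tele (f : ℕ → ℝ) (n : ℕ) :
    ∑ j ∈ Icc 1 n, (f (j+1) - f j) = f (n+1) - f 1 := by
  induction n with
  | zero => simp
  | succ n ih =>
    rw [Finset.sum_Icc_succ_top (by omega : 1 ≤ n + 1), ih]
    ring

/-- Abel summation by parts over `Icc 1 n` -/
lemma abel (b w : ℕ → ℝ) : ∀ n, 1 ≤ n →
    ∑ j ∈ Icc 1 n, b j * w j
      = ∑ j ∈ Icc 1 (n-1), (b (j+1) - b j) * (∑ ℓ ∈ Icc (j+1) n, w ℓ)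
        + b 1 * ∑ ℓ ∈ Icc 1 n, w ℓ := by
  intro n hn
  induction n, hn using Nat.le_induction with
  | base => simp
  | succ n hn ih =>
    obtain ⟨m, rfl⟩ : ∃ m, n = m + 1 := ⟨n - 1, by omega⟩
    simp only [Nat.add_sub_cancel] at ih ⊢
    have hsplit : ∀ j ∈ Icc 1 (m+1), (b (j+1) - b j) * (∑ ℓ ∈ Icc (j+1) (m+1+1), w ℓ)
        = (b (j+1) - b j) * (∑ ℓ ∈ Icc (j+1) (m+1), w ℓ) + (b (j+1) - b j) * w (m+1+1) := by
      intro j hj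
      simp only [mem_Icc] at hj
      rw [Finset.sum_Icc_succ_top (by omega : j+1 ≤ m+1+1)]
      ring
    rw [Finset.sum_congr rfl hsplit, Finset.sum_add_distrib, ← Finset.sum_mul,
        tele b (m+1),
        Finset.sum_Icc_succ_top (by omega : (1:ℕ) ≤ m+1)
          (fun j => (b (j+1) - b j) * (∑ ℓ ∈ Icc (j+1) (m+1), w ℓ)),
        Finset.sum_Icc_succ_top (by omega : (1:ℕ) ≤ m+1+1) w,
        Finset.sum_Icc_succ_top (by omega : (1:ℕ) ≤ m+1+1) (fun j => b j * w j), ih]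
    have : ∑ ℓ ∈ Icc (m+1+1) (m+1), w ℓ = 0 := by
      rw [Finset.Icc_eq_empty (by omega)]; simp
    rw [this]
    ring

/-- the key one-step inequality: `Y_{n+1} − Y_n ≤ a₀ w_{n+1}² + 2 w_{n+1} ∑ a_{n+1-j} w_j` -/
lemma stepkey (σ : ℝ) (χ : ℕ → ℕ → ℝ) (w : ℕ → ℝ) (n : ℕ) (hn : 1 ≤ n)
    (hc1 : modKer σ χ (n+1) n ≤ modKer σ χ n (n-1))
    (hc2 : ∀ j, 1 ≤ j → j ≤ n-1 →
      modKer σ χ (n+1) (n-j) - modKer σ χ (n+1) (n+1-j)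
        ≤ modKer σ χ n (n-j-1) - modKer σ χ n (n-j)) :
    Yfun σ χ w (n+1) ≤ Yfun σ χ w n
      + modKer σ χ (n+1) 0 * (w (n+1))^2
      + 2 * w (n+1) * ∑ j ∈ Icc 1 n, modKer σ χ (n+1) (n+1-j) * w j := by
  obtain ⟨m, rfl⟩ : ∃ m, n = m + 1 := ⟨n - 1, by omega⟩
  set a : ℕ → ℝ := modKer σ χ (m+1+1) with ha
  set W : ℝ := w (m+1+1) with hW
  have key : Yfun σ χ w (m+1+1)
      = (∑ j ∈ Icc 1 m, (a (m+1-j) - a (m+1+1-j)) * (∑ ℓ ∈ Icc (j+1) (m+1), w ℓ)^2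
          + a (m+1) * (∑ ℓ ∈ Icc 1 (m+1), w ℓ)^2)
        + (a 0 * W^2 + 2 * W * ∑ j ∈ Icc 1 (m+1), a (m+1+1-j) * w j) := by
    have habel : ∑ j ∈ Icc 1 (m+1), a (m+1+1-j) * w j
        = ∑ j ∈ Icc 1 m, (a (m+1-j) - a (m+1+1-j)) * (∑ ℓ ∈ Icc (j+1) (m+1), w ℓ)
          + a (m+1) * ∑ ℓ ∈ Icc 1 (m+1), w ℓ := by
      have h := abel (fun j => a (m+1+1-j)) w (m+1) (by omega)
      simp only [Nat.add_sub_cancel] at h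
      refine h.trans ?_
      congr 1
      refine Finset.sum_congr rfl fun j hj => ?_
      rw [show m+1+1-(j+1) = m+1-j from by omega]
    have e1 : ∀ j ∈ Icc 1 (m+1),
        (modKer σ χ (m+1+1) (m+1+1-j-1) - modKer σ χ (m+1+1) (m+1+1-j))
            * (∑ ℓ ∈ Icc (j+1) (m+1+1), w ℓ)^2
        = ((a (m+1-j) - a (m+1+1-j)) * (∑ ℓ ∈ Icc (j+1) (m+1), w ℓ)^2
           + 2*W*((a (m+1-j) - a (m+1+1-j)) * (∑ ℓ ∈ Icc (j+1) (m+1), w ℓ))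
           + (a (m+1-j) - a (m+1+1-j)) * W^2) := by
      intro j hj
      simp only [mem_Icc] at hj
      rw [show m+1+1-j-1 = m+1-j from by omega,
          Finset.sum_Icc_succ_top (by omega : j+1 ≤ m+1+1)]
      ring
    have etel : ∑ j ∈ Icc 1 (m+1), (a (m+1-j) - a (m+1+1-j)) = a 0 - a (m+1) := by
      rw [Finset.sum_congr rfl (fun j hj =>
        (show a (m+1-j) - a (m+1+1-j)
            = (fun i => a (m+1+1-i)) (j+1) - (fun i => a (m+1+1-i)) j from by
          simp only
          rw [show m+1+1-(j+1) = m+1-j from by omega])),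
        tele (fun i => a (m+1+1-i)) (m+1)]
      simp only [Nat.sub_self, Nat.add_sub_cancel]
    have hempty : ∑ ℓ ∈ Icc (m+1+1) (m+1), w ℓ = 0 := by
      rw [Finset.Icc_eq_empty (by omega)]; simp
    simp only [Yfun, Nat.add_sub_cancel]
    rw [Finset.sum_congr rfl e1, Finset.sum_add_distrib, Finset.sum_add_distrib,
        ← Finset.mul_sum, ← Finset.sum_mul, etel, habel,
        Finset.sum_Icc_succ_top (by omega : (1:ℕ) ≤ m+1)
          (fun j => (a (m+1-j) - a (m+1+1-j)) * (∑ ℓ ∈ Icc (j+1) (m+1), w ℓ)^2),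
        Finset.sum_Icc_succ_top (by omega : (1:ℕ) ≤ m+1)
          (fun j => (a (m+1-j) - a (m+1+1-j)) * (∑ ℓ ∈ Icc (j+1) (m+1), w ℓ)),
        Finset.sum_Icc_succ_top (by omega : (1:ℕ) ≤ m+1+1) w, hempty]
    rw [show m+1-(m+1) = 0 from by omega, show m+1+1-(m+1) = 1 from by omega]
    ring
  rw [key]
  have hle : ∑ j ∈ Icc 1 m, (a (m+1-j) - a (m+1+1-j)) * (∑ ℓ ∈ Icc (j+1) (m+1), w ℓ)^2
        + a (m+1) * (∑ ℓ ∈ Icc 1 (m+1), w ℓ)^2 ≤ Yfun σ χ w (m+1) := by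
    simp only [Yfun, Nat.add_sub_cancel]
    refine add_le_add (Finset.sum_le_sum fun j hj => ?_)
      (mul_le_mul_of_nonneg_right hc1 (sq_nonneg _))
    simp only [mem_Icc] at hj
    exact mul_le_mul_of_nonneg_right (hc2 j hj.1 (by omega)) (sq_nonneg _)
  linarith

/-- Positive definiteness of the convolution kernels under row decrease,
column decrease and algebraic convexity of the modified kernels. -/
theorem stmt_6 (σ : ℝ) (hσ0 : 0 ≤ σ) (hσ2 : σ < 2) (χ : ℕ → ℕ → ℝ)
    (hpos : ∀ k, 1 ≤ k → ∀ j, j ≤ k - 1 → 0 < χ k j)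
    (hrow : ∀ n, 2 ≤ n → ∀ j, 1 ≤ j → j ≤ n - 1 →
      modKer σ χ n (n - j) ≤ modKer σ χ n (n - j - 1) ∧ 0 < modKer σ χ n (n - j))
    (hcol : ∀ n, 2 ≤ n → ∀ j, 1 ≤ j → j ≤ n - 1 →
      modKer σ χ n (n - j) ≤ modKer σ χ (n-1) (n - 1 - j))
    (hconv : ∀ n, 3 ≤ n → ∀ j, 1 ≤ j → j ≤ n - 2 →
      modKer σ χ n (n - 1 - j) - modKer σ χ n (n - j)
        ≤ modKer σ χ (n-1) (n - 2 - j) - modKer σ χ (n-1) (n - 1 - j)) :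
    ∀ n, 1 ≤ n → ∀ w : ℕ → ℝ,
      2 * ∑ k ∈ Finset.Icc 1 n, w k * ∑ j ∈ Finset.Icc 1 k, χ k (k - j) * w j
        ≥ Yfun σ χ w n + σ * ∑ k ∈ Finset.Icc 1 n, χ k 0 * (w k)^2 := by
  intro n hn
  induction n, hn using Nat.le_induction with
  | base =>
    intro w
    simp only [Yfun, Nat.sub_self, Finset.Icc_self, Finset.sum_singleton, modKer,
      if_pos rfl]
    simp only [show (1:ℕ) - 1 = 0 from rfl, Finset.Icc_eq_empty (by omega : ¬ (1:ℕ) ≤ 0),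
      Finset.sum_empty]
    ring_nf
    simp only [if_true]
    ring_nf
    linarith [sq_nonneg (w 1)]
  | succ n hn ih =>
    intro w
    have hc1 : modKer σ χ (n+1) n ≤ modKer σ χ n (n-1) := by
      have h := hcol (n+1) (by omega) 1 le_rfl (by omega)
      rw [show n+1-1 = n from by omega] at h
      exact h
    have hc2 : ∀ j, 1 ≤ j → j ≤ n-1 →
        modKer σ χ (n+1) (n-j) - modKer σ χ (n+1) (n+1-j)
          ≤ modKer σ χ n (n-j-1) - modKer σ χ n (n-j) := by
      intro j hj1 hj2
      have h := hconv (n+1) (by omega) j hj1 (by omega)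
      rw [show n+1-1-j = n-j from by omega, show n+1-1 = n from by omega,
          show n+1-2-j = n-j-1 from by omega] at h
      exact h
    have hY := stepkey σ χ w n hn hc1 hc2
    have hih := ih w
    rw [Finset.sum_Icc_succ_top (by omega : (1:ℕ) ≤ n+1)
          (fun k => w k * ∑ j ∈ Finset.Icc 1 k, χ k (k - j) * w j),
        Finset.sum_Icc_succ_top (by omega : (1:ℕ) ≤ n+1)
          (fun k => χ k 0 * (w k)^2),
        Finset.sum_Icc_succ_top (by omega : (1:ℕ) ≤ n+1)
          (fun j => χ (n+1) (n+1-j) * w j)]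
    rw [show n+1-(n+1) = 0 from by omega]
    have hmatch : ∑ j ∈ Finset.Icc 1 n, χ (n+1) (n+1-j) * w j
        = ∑ j ∈ Finset.Icc 1 n, modKer σ χ (n+1) (n+1-j) * w j := by
      refine Finset.sum_congr rfl fun j hj => ?_
      simp only [mem_Icc] at hj
      rw [modKer, if_neg (by omega)]
    rw [hmatch]
    have hmk0 : modKer σ χ (n+1) 0 = (2-σ) * χ (n+1) 0 := by rw [modKer, if_pos rfl]
    rw [hmk0] at hY
    set B := ∑ j ∈ Finset.Icc 1 n, modKer σ χ (n+1) (n+1-j) * w j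
    nlinarith [hih, hY]
end

section
/- Let 0 = t₀ < t₁ < ⋯ < t_n, α ∈ (0,1), ω_β(t) := t^{β−1}/Γ(β), τ_k := t_k − t_{k−1}, a_{n−k}^{(n)} := (1/τ_k)∫_{t_{k−1}}^{t_k} ω_{1−α}(t_n − s) ds, I_{n−k}^{(n)} := ∫_{t_{k−1}}^{t_k} ((t − t_k)/τ_k) ω_{−α}(t_n − t) dt, and J_{n−k}^{(n)} := ∫_{t_{k−1}}^{t_k} ((t_{k−1} − t)/τ_k) ω_{−α}(t_n − t) dt. Then for 1 ≤ k ≤ n−1, a_{n−k−1}^{(n)} − a_{n−k}^{(n)} = I_{n−k−1}^{(n)} + J_{n−k}^{(n)}. -/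
open intervalIntegral MeasureTheory Set

noncomputable def omegaK (β t : ℝ) : ℝ := t ^ (β - 1) / Real.Gamma β

section helpers
variable {α T a b : ℝ}

lemma gamma2 (h1 : α < 1) : Real.Gamma (2 - α) = (1 - α) * Real.Gamma (1 - α) := by
  have := Real.Gamma_add_one (s := 1 - α) (by intro h; nlinarith [h])
  rw [show (2:ℝ) - α = 1 - α + 1 by ring, this]

lemma gammaneg (h0 : 0 < α) : Real.Gamma (1 - α) = -α * Real.Gamma (-α) := by
  have := Real.Gamma_add_one (s := -α) (by intro h; nlinarith [h])
  rw [show (1:ℝ) - α = -α + 1 by ring, this]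

lemma hasDerivAt_sub_rpow (p : ℝ) {x : ℝ} (hx : T - x ≠ 0) :
    HasDerivAt (fun s => (T - s) ^ p) (-(p * (T - x) ^ (p - 1))) x := by
  have h1 : HasDerivAt (fun s : ℝ => T - s) (-1) x := (hasDerivAt_id x).const_sub T
  have h2 := (Real.hasDerivAt_rpow_const (x := T - x) (p := p) (Or.inl hx)).comp x h1
  simpa [mul_comm, Function.comp_def] using h2

/-- interval integrability of s ↦ (T-s)^r for r > -1 -/
lemma ii_rpow {r : ℝ} (hr : -1 < r) (a b : ℝ) :
    IntervalIntegrable (fun s => (T - s) ^ r) volume a b := by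
  simpa using (intervalIntegrable_rpow' (a := T - a) (b := T - b) hr).comp_sub_left T

lemma cont_rpow_pos {p : ℝ} (hp : 0 < p) : Continuous fun s : ℝ => (T - s) ^ p := by
  have : Continuous fun s : ℝ => T - s := by continuity
  refine (continuous_iff_continuousAt).2 fun x => ?_
  exact (Real.continuousAt_rpow_const _ _ (Or.inr hp.le)).comp this.continuousAt

end helpers

section main
variable {α T a b : ℝ}

lemma mul_self_rpow {x q : ℝ} (hx : 0 ≤ x) (hq : q + 1 ≠ 0) : x * x ^ q = x ^ (q + 1) := by
  rcases eq_or_lt_of_le hx with h | h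
  · rw [← h, Real.zero_rpow hq, mul_comm, mul_zero]
  · rw [Real.rpow_add h, Real.rpow_one]; ring

lemma contOn_rpow_ne (p : ℝ) {s : Set ℝ} (h : ∀ x ∈ s, T - x ≠ 0) :
    ContinuousOn (fun x => (T - x) ^ p) s := by
  intro x hx
  exact ((Real.continuousAt_rpow_const _ _ (Or.inl (h x hx))).comp
    (by continuity : Continuous fun y : ℝ => T - y).continuousAt).continuousWithinAt

lemma intA (h0 : 0 < α) (h1 : α < 1) (hab : a < b) (hbT : b ≤ T) :
    ∫ s in a..b, (T - s) ^ (-α) / Real.Gamma (1 - α)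
      = ((T - a) ^ (1 - α) - (T - b) ^ (1 - α)) / Real.Gamma (2 - α) := by
  have hΓ1 : (0:ℝ) < Real.Gamma (1 - α) := Real.Gamma_pos_of_pos (by linarith)
  have hΓ2 : Real.Gamma (2 - α) = (1 - α) * Real.Gamma (1 - α) := gamma2 h1
  set F : ℝ → ℝ := fun s => -((T - s) ^ (1 - α)) / Real.Gamma (2 - α) with hF
  have key : ∫ s in a..b, (T - s) ^ (-α) / Real.Gamma (1 - α) = F b - F a := by
    apply integral_eq_sub_of_hasDeriv_right_of_le hab.le
    · exact (((cont_rpow_pos (by linarith : (0:ℝ) < 1 - α)).neg.div_const _)).continuousOn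
    · intro x hx
      have hTx : 0 < T - x := by rcases hx with ⟨_, h2⟩; linarith
      have hd := ((hasDerivAt_sub_rpow (T := T) (1 - α) hTx.ne').neg).div_const
        (Real.Gamma (2 - α))
      have : -(-((1 - α) * (T - x) ^ (1 - α - 1))) / Real.Gamma (2 - α)
          = (T - x) ^ (-α) / Real.Gamma (1 - α) := by
        rw [show (1:ℝ) - α - 1 = -α by ring, hΓ2, neg_neg,
          mul_div_mul_left _ _ (by linarith : (1:ℝ) - α ≠ 0)]
      rw [this] at hd
      exact hd.hasDerivWithinAt
    · exact (ii_rpow (by linarith) a b).div_const _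
  rw [key, hF]
  simp only
  ring

lemma intI (h0 : 0 < α) (h1 : α < 1) (hab : a < b) (hbT : b ≤ T) :
    ∫ s in a..b, ((s - b) / (b - a)) * ((T - s) ^ (-α - 1) / Real.Gamma (-α))
      = ((T - a) ^ (1 - α) - (T - b) ^ (1 - α)) / ((b - a) * Real.Gamma (2 - α))
        - (T - a) ^ (-α) / Real.Gamma (1 - α) := by
  have hΓ1 : (0:ℝ) < Real.Gamma (1 - α) := Real.Gamma_pos_of_pos (by linarith)
  have hΓ2 : Real.Gamma (2 - α) = (1 - α) * Real.Gamma (1 - α) := gamma2 h1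
  have hΓn : Real.Gamma (1 - α) = -α * Real.Gamma (-α) := gammaneg h0
  have hΓn0 : Real.Gamma (-α) ≠ 0 := by
    intro h; rw [h, mul_zero] at hΓn; exact hΓ1.ne' hΓn
  have hba : b - a ≠ 0 := by linarith
  set F : ℝ → ℝ := fun s => (b - s) * (T - s) ^ (-α) / ((b - a) * Real.Gamma (1 - α))
      - (T - s) ^ (1 - α) / ((b - a) * Real.Gamma (2 - α)) with hF
  have key : ∫ s in a..b, ((s - b) / (b - a)) * ((T - s) ^ (-α - 1) / Real.Gamma (-α))
      = F b - F a := by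
    apply integral_eq_sub_of_hasDeriv_right_of_le hab.le
    · -- continuity of F on Icc a b
      rcases eq_or_lt_of_le hbT with hTb | hTb
      · -- T = b
        have hcg : ContinuousOn (fun s : ℝ => (T - s) ^ (1 - α) / ((b - a) * Real.Gamma (1 - α))
            - (T - s) ^ (1 - α) / ((b - a) * Real.Gamma (2 - α))) (Icc a b) :=
          (((cont_rpow_pos (by linarith : (0:ℝ) < 1 - α)).div_const _).sub
            ((cont_rpow_pos (by linarith : (0:ℝ) < 1 - α)).div_const _)).continuousOn
        apply hcg.congr
        intro x hx
        have hx2 : 0 ≤ T - x := by rcases hx with ⟨_, h2⟩; linarith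
        have : (b - x) = (T - x) := by rw [← hTb]
        rw [hF]; simp only [this]
        rw [mul_self_rpow hx2 (by intro h; exact (by linarith : (1:ℝ) - α ≠ 0) (by linarith)),
          show -α + 1 = 1 - α by ring]
      · -- b < T
        have hcont : ContinuousOn (fun s : ℝ => (T - s) ^ (-α)) (Icc a b) :=
          contOn_rpow_ne _ (fun x hx => ne_of_gt (by rcases hx with ⟨_, h2⟩; linarith : (0:ℝ) < T - x))
        exact (((continuousOn_const.sub continuousOn_id).mul hcont).div_const _).sub
          (((cont_rpow_pos (by linarith : (0:ℝ) < 1 - α)).continuousOn).div_const _)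
    · intro x hx
      have hTx : 0 < T - x := by rcases hx with ⟨_, h2⟩; linarith
      have hd1 : HasDerivAt (fun s => (b - s) * (T - s) ^ (-α))
          ((-1) * (T - x) ^ (-α) + (b - x) * (-(-α * (T - x) ^ (-α - 1)))) x :=
        ((hasDerivAt_id x).const_sub b).mul (hasDerivAt_sub_rpow (-α) hTx.ne')
      have hd2 := hasDerivAt_sub_rpow (T := T) (1 - α) hTx.ne'
      have hd := (hd1.div_const ((b - a) * Real.Gamma (1 - α))).sub
        (hd2.div_const ((b - a) * Real.Gamma (2 - α)))
      have heq : ((-1) * (T - x) ^ (-α) + (b - x) * (-(-α * (T - x) ^ (-α - 1))))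
            / ((b - a) * Real.Gamma (1 - α))
          - (-((1 - α) * (T - x) ^ (1 - α - 1))) / ((b - a) * Real.Gamma (2 - α))
          = ((x - b) / (b - a)) * ((T - x) ^ (-α - 1) / Real.Gamma (-α)) := by
        rw [show (1:ℝ) - α - 1 = -α by ring, hΓ2, hΓn]
        have hα0 : α ≠ 0 := h0.ne'
        have h1α : (1:ℝ) - α ≠ 0 := by linarith
        field_simp
        ring
      rw [heq] at hd
      exact hd.hasDerivWithinAt
    · -- interval integrability
      rcases eq_or_lt_of_le hbT with hTb | hTb
      · have hg : IntervalIntegrable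
            (fun s => -((T - s) ^ (-α)) / ((b - a) * Real.Gamma (-α))) volume a b :=
          ((ii_rpow (by linarith) a b).neg.div_const _)
        apply hg.congr
        intro x hx
        beta_reduce
        have hx2 : 0 ≤ T - x := by
          rcases hx with ⟨h1', h2'⟩
          simp only [min_def, max_def] at h1' h2'
          split_ifs at h2' <;> linarith
        have hbx : x - b = -(T - x) := by rw [← hTb]; ring
        have hmm : (T - x) * (T - x) ^ (-α - 1) = (T - x) ^ (-α) := by
          rw [mul_self_rpow hx2 (by intro h; exact h0.ne' (by linarith)),
            show -α - 1 + 1 = -α by ring]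
        rw [hbx, div_mul_div_comm, neg_mul, hmm, neg_div]
      · apply ContinuousOn.intervalIntegrable
        rw [uIcc_of_le hab.le]
        have hcont : ContinuousOn (fun s : ℝ => (T - s) ^ (-α - 1)) (Icc a b) :=
          contOn_rpow_ne _ (fun x hx => ne_of_gt (by rcases hx with ⟨_, h2⟩; linarith : (0:ℝ) < T - x))
        exact (((continuousOn_id.sub continuousOn_const).div_const _).mul
          (hcont.div_const _))
  rw [key, hF]
  simp only
  rw [show b - b = 0 by ring, zero_mul, zero_div,
    show (b - a) * (T - a) ^ (-α) / ((b - a) * Real.Gamma (1 - α))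
      = (T - a) ^ (-α) / Real.Gamma (1 - α) by rw [mul_div_mul_left _ _ hba]]
  ring

lemma intJ (h0 : 0 < α) (h1 : α < 1) (hab : a < b) (hbT : b < T) :
    ∫ s in a..b, ((a - s) / (b - a)) * ((T - s) ^ (-α - 1) / Real.Gamma (-α))
      = (T - b) ^ (-α) / Real.Gamma (1 - α)
        - ((T - a) ^ (1 - α) - (T - b) ^ (1 - α)) / ((b - a) * Real.Gamma (2 - α)) := by
  have hΓ1 : (0:ℝ) < Real.Gamma (1 - α) := Real.Gamma_pos_of_pos (by linarith)
  have hΓ2 : Real.Gamma (2 - α) = (1 - α) * Real.Gamma (1 - α) := gamma2 h1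
  have hΓn : Real.Gamma (1 - α) = -α * Real.Gamma (-α) := gammaneg h0
  have hΓn0 : Real.Gamma (-α) ≠ 0 := by
    intro h; rw [h, mul_zero] at hΓn; exact hΓ1.ne' hΓn
  have hba : b - a ≠ 0 := by linarith
  set F : ℝ → ℝ := fun s => (s - a) * (T - s) ^ (-α) / ((b - a) * Real.Gamma (1 - α))
      + (T - s) ^ (1 - α) / ((b - a) * Real.Gamma (2 - α)) with hF
  have key : ∫ s in a..b, ((a - s) / (b - a)) * ((T - s) ^ (-α - 1) / Real.Gamma (-α))
      = F b - F a := by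
    apply integral_eq_sub_of_hasDeriv_right_of_le hab.le
    · have hcont : ContinuousOn (fun s : ℝ => (T - s) ^ (-α)) (Icc a b) :=
        contOn_rpow_ne _ (fun x hx => ne_of_gt (by rcases hx with ⟨_, h2⟩; linarith : (0:ℝ) < T - x))
      exact (((continuousOn_id.sub continuousOn_const).mul hcont).div_const _).add
        (((cont_rpow_pos (by linarith : (0:ℝ) < 1 - α)).continuousOn).div_const _)
    · intro x hx
      have hTx : 0 < T - x := by rcases hx with ⟨_, h2⟩; linarith
      have hd1 : HasDerivAt (fun s => (s - a) * (T - s) ^ (-α))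
          ((1:ℝ) * (T - x) ^ (-α) + (x - a) * (-(-α * (T - x) ^ (-α - 1)))) x :=
        ((hasDerivAt_id x).sub_const a).mul (hasDerivAt_sub_rpow (-α) hTx.ne')
      have hd2 := hasDerivAt_sub_rpow (T := T) (1 - α) hTx.ne'
      have hd := (hd1.div_const ((b - a) * Real.Gamma (1 - α))).add
        (hd2.div_const ((b - a) * Real.Gamma (2 - α)))
      have heq : ((1:ℝ) * (T - x) ^ (-α) + (x - a) * (-(-α * (T - x) ^ (-α - 1))))
            / ((b - a) * Real.Gamma (1 - α))
          + (-((1 - α) * (T - x) ^ (1 - α - 1))) / ((b - a) * Real.Gamma (2 - α))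
          = ((a - x) / (b - a)) * ((T - x) ^ (-α - 1) / Real.Gamma (-α)) := by
        rw [show (1:ℝ) - α - 1 = -α by ring, hΓ2, hΓn]
        have hα0 : α ≠ 0 := h0.ne'
        have h1α : (1:ℝ) - α ≠ 0 := by linarith
        field_simp
        ring
      rw [heq] at hd
      exact hd.hasDerivWithinAt
    · apply ContinuousOn.intervalIntegrable
      rw [uIcc_of_le hab.le]
      have hcont : ContinuousOn (fun s : ℝ => (T - s) ^ (-α - 1)) (Icc a b) :=
        contOn_rpow_ne _ (fun x hx => ne_of_gt (by rcases hx with ⟨_, h2⟩; linarith : (0:ℝ) < T - x))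
      exact (((continuousOn_const.sub continuousOn_id).div_const _).mul
        (hcont.div_const _))
  rw [key, hF]
  simp only
  rw [show a - a = 0 by ring, zero_mul, zero_div,
    show (b - a) * (T - b) ^ (-α) / ((b - a) * Real.Gamma (1 - α))
      = (T - b) ^ (-α) / Real.Gamma (1 - α) by rw [mul_div_mul_left _ _ hba]]
  ring

end main

/-- a_{n−k−1}^{(n)} − a_{n−k}^{(n)} = I_{n−k−1}^{(n)} + J_{n−k}^{(n)} for 1 ≤ k ≤ n−1. -/
theorem stmt_7 (n : ℕ) (hn : 2 ≤ n) (t : ℕ → ℝ) (ht0 : t 0 = 0)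
    (hmono : ∀ k, k < n → t k < t (k+1))
    (α : ℝ) (hα : α ∈ Set.Ioo (0:ℝ) 1)
    (k : ℕ) (hk1 : 1 ≤ k) (hkn : k ≤ n - 1) :
    (1 / (t (k+1) - t k)) * (∫ s in (t k)..(t (k+1)), omegaK (1 - α) (t n - s))
      - (1 / (t k - t (k-1))) * (∫ s in (t (k-1))..(t k), omegaK (1 - α) (t n - s))
    = (∫ s in (t k)..(t (k+1)), ((s - t (k+1)) / (t (k+1) - t k)) * omegaK (-α) (t n - s))
      + (∫ s in (t (k-1))..(t k), ((t (k-1) - s) / (t k - t (k-1))) * omegaK (-α) (t n - s)) := by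
  obtain ⟨h0, h1⟩ := hα
  have hkn' : k < n := by omega
  have hmle : ∀ m, m ≤ n → ∀ i, i ≤ m → t i ≤ t m := by
    intro m
    induction m with
    | zero => intro _ i hi; rw [Nat.le_zero.mp hi]
    | succ m ih =>
      intro hm i hi
      rcases Nat.lt_or_ge i (m+1) with h | h
      · exact le_trans (ih (by omega) i (by omega)) (hmono m (by omega)).le
      · rw [show i = m + 1 by omega]
  have hxy : t (k-1) < t k := by
    have := hmono (k-1) (by omega)
    rwa [show k - 1 + 1 = k by omega] at this
  have hyz : t k < t (k+1) := hmono k hkn'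
  have hzT : t (k+1) ≤ t n := hmle n le_rfl (k+1) (by omega)
  have hyT : t k < t n := lt_of_lt_of_le hyz hzT
  have hΓ1 : (0:ℝ) < Real.Gamma (1 - α) := Real.Gamma_pos_of_pos (by linarith)
  have hΓ2 : (0:ℝ) < Real.Gamma (2 - α) := Real.Gamma_pos_of_pos (by linarith)
  simp only [omegaK, show (1:ℝ) - α - 1 = -α by ring]
  rw [intA h0 h1 hyz hzT, intA h0 h1 hxy hyT.le, intI h0 h1 hyz hzT, intJ h0 h1 hxy hyT]
  have h1' : t (k+1) - t k ≠ 0 := by linarith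
  have h2' : t k - t (k-1) ≠ 0 := by linarith
  field_simp
  ring
end

section
/- With the notation of the previous statement, for n ≥ 2 one has (2(1−α)/(2−α))·a₀^{(n)} − a₁^{(n)} = (α/(2−α))·ω_{1−α}(τ_n) + J₁^{(n)}. In particular a₀^{(n)} = ω_{1−α}(τ_n)/(1−α) = ω_{2−α}(τ_n)/τ_n. -/
lemma deriv_crpow (c p s : ℝ) (hs : 0 < c - s) :
    HasDerivAt (fun x => (c - x) ^ p) (-(p * (c - s) ^ (p - 1))) s := by
  have h1 : HasDerivAt (fun x : ℝ => c - x) (-1) s := (hasDerivAt_id s).const_sub c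
  have h2 := h1.rpow_const (p := p) (Or.inl hs.ne')
  convert h2 using 1
  ring

lemma int_rpow (a b c p : ℝ) (hp : p ≠ 0) (h : ∀ s ∈ Set.uIcc a b, 0 < c - s) :
    ∫ s in a..b, (c - s) ^ (p - 1) = ((c - a) ^ p - (c - b) ^ p) / p := by
  have key : ∀ s ∈ Set.uIcc a b,
      HasDerivAt (fun x => -(c - x) ^ p / p) ((c - s) ^ (p - 1)) s := by
    intro s hs
    have := (deriv_crpow c p s (h s hs)).neg.div_const p
    refine this.congr_deriv ?_
    rw [neg_neg, mul_div_cancel_left₀ _ hp]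
  rw [intervalIntegral.integral_eq_sub_of_hasDerivAt key ?_]
  · field_simp; ring
  · apply ContinuousOn.intervalIntegrable
    apply ContinuousOn.rpow_const (by fun_prop)
    exact fun s hs => Or.inl (h s hs).ne'

lemma int_J (a b c α : ℝ) (hα1 : α < 1)
    (h : ∀ s ∈ Set.uIcc a b, 0 < c - s) :
    ∫ s in a..b, -α * ((a - s) * (c - s) ^ (-α - 1))
      = ((b - a) * (c - b) ^ (-α) + (c - b) ^ (1 - α) / (1 - α))
        - (c - a) ^ (1 - α) / (1 - α) := by
  have h1α : (1 : ℝ) - α ≠ 0 := by linarith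
  have key : ∀ s ∈ Set.uIcc a b,
      HasDerivAt (fun x => -((a - x) * (c - x) ^ (-α)) + (c - x) ^ (1 - α) / (1 - α))
        (-α * ((a - s) * (c - s) ^ (-α - 1))) s := by
    intro s hs
    have hcs := h s hs
    have d1 : HasDerivAt (fun x : ℝ => a - x) (-1) s := (hasDerivAt_id s).const_sub a
    have d2 := deriv_crpow c (-α) s hcs
    have d3 := deriv_crpow c (1 - α) s hcs
    have := ((d1.mul d2).neg).add (d3.div_const (1 - α))
    refine this.congr_deriv ?_
    have e1 : (1 : ℝ) - α - 1 = -α := by ring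
    rw [e1]
    field_simp
    ring
  rw [intervalIntegral.integral_eq_sub_of_hasDerivAt key ?_]
  · ring
  · apply ContinuousOn.intervalIntegrable
    apply ContinuousOn.mul continuousOn_const
    apply ContinuousOn.mul (by fun_prop)
    apply ContinuousOn.rpow_const (by fun_prop)
    exact fun s hs => Or.inl (h s hs).ne'

/-- (2(1−α)/(2−α))a₀^{(n)} − a₁^{(n)} = (α/(2−α))ω_{1−α}(τₙ) + J₁^{(n)} for n ≥ 2,
and a₀^{(n)} = ω_{1−α}(τₙ)/(1−α) = ω_{2−α}(τₙ)/τₙ. -/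
theorem stmt_8 (n : ℕ) (hn : 2 ≤ n) (t : ℕ → ℝ) (ht0 : t 0 = 0)
    (hmono : ∀ k, k < n → t k < t (k+1))
    (α : ℝ) (hα : α ∈ Set.Ioo (0:ℝ) 1) :
    (2 * (1 - α) / (2 - α)) *
        ((1 / (t n - t (n-1))) * (∫ s in (t (n-1))..(t n), omegaK (1 - α) (t n - s)))
      - (1 / (t (n-1) - t (n-2))) * (∫ s in (t (n-2))..(t (n-1)), omegaK (1 - α) (t n - s))
    = (α / (2 - α)) * omegaK (1 - α) (t n - t (n-1))
      + (∫ s in (t (n-2))..(t (n-1)),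
          ((t (n-2) - s) / (t (n-1) - t (n-2))) * omegaK (-α) (t n - s)) ∧
    (1 / (t n - t (n-1))) * (∫ s in (t (n-1))..(t n), omegaK (1 - α) (t n - s))
      = omegaK (1 - α) (t n - t (n-1)) / (1 - α) ∧
    (1 / (t n - t (n-1))) * (∫ s in (t (n-1))..(t n), omegaK (1 - α) (t n - s))
      = omegaK (2 - α) (t n - t (n-1)) / (t n - t (n-1)) := by
  obtain ⟨hα0, hα1⟩ := hα
  set a := t (n-2) with ha
  set b := t (n-1) with hb
  set c := t n with hc
  have hab : a < b := by
    have := hmono (n-2) (by omega)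
    rwa [show n-2+1 = n-1 from by omega] at this
  have hbc : b < c := by
    have := hmono (n-1) (by omega)
    rwa [show n-1+1 = n from by omega] at this
  have h1α : (0:ℝ) < 1 - α := by linarith
  have hΓ : 0 < Real.Gamma (1-α) := Real.Gamma_pos_of_pos h1α
  have hΓne := hΓ.ne'
  have hΓneg : Real.Gamma (-α) = Real.Gamma (1-α) / (-α) := by
    have := Real.Gamma_add_one (show (-α:ℝ) ≠ 0 by linarith)
    rw [show -α + 1 = 1 - α from by ring] at this
    field_simp [this]
    linarith
  have hΓ2 : Real.Gamma (2-α) = (1-α) * Real.Gamma (1-α) := by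
    have := Real.Gamma_add_one h1α.ne'
    rwa [show (1:ℝ)-α + 1 = 2 - α from by ring] at this
  have h2α : (0:ℝ) < 2 - α := by linarith
  have hba : b - a ≠ 0 := by linarith
  have hcb : c - b ≠ 0 := by linarith
  have h1αne : (1:ℝ) - α ≠ 0 := h1α.ne'
  have h2αne : (2:ℝ) - α ≠ 0 := h2α.ne'
  have hpos_ab : ∀ s ∈ Set.uIcc a b, 0 < c - s := by
    intro s hs
    rw [Set.uIcc_of_le hab.le] at hs
    have := hs.2; linarith
  have hsplit : (c-b)^(1-α) = (c-b)^(-α) * (c-b) := by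
    rw [show (1:ℝ)-α = -α + 1 from by ring, Real.rpow_add_one (by linarith : c - b ≠ 0)]
  have hI0 : (∫ s in b..c, omegaK (1-α) (c - s)) = (c-b)^(1-α)/(1-α)/Real.Gamma (1-α) := by
    simp only [omegaK, show (1:ℝ)-α-1 = -α from by ring]
    rw [intervalIntegral.integral_div,
      intervalIntegral.integral_comp_sub_left (fun u => u ^ (-α)) c, sub_self,
      integral_rpow (Or.inl (by linarith)),
      Real.zero_rpow (by linarith : -α + 1 ≠ 0),
      show -α + 1 = 1 - α from by ring]
    ring
  have hI1 : (∫ s in a..b, omegaK (1-α) (c - s))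
      = ((c-a)^(1-α) - (c-b)^(1-α))/(1-α)/Real.Gamma (1-α) := by
    simp only [omegaK]
    rw [intervalIntegral.integral_div, int_rpow a b c (1-α) h1α.ne' hpos_ab]
  have hJ : (∫ s in a..b, ((a - s)/(b-a)) * omegaK (-α) (c - s))
      = (1/((b-a) * Real.Gamma (1-α)))
        * ∫ s in a..b, -α * ((a-s)*(c-s)^(-α-1)) := by
    rw [← intervalIntegral.integral_const_mul]
    apply intervalIntegral.integral_congr
    intro s _
    simp only [omegaK, hΓneg, show -α - 1 = -α - 1 from rfl]
    field_simp
  rw [int_J a b c α hα1 hpos_ab] at hJ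
  refine ⟨?_, ?_, ?_⟩
  · rw [hI0, hI1, hJ]
    simp only [omegaK, show (1:ℝ)-α-1 = -α from by ring]
    rw [hsplit]
    field_simp
    ring
  · rw [hI0, hsplit]
    simp only [omegaK, show (1:ℝ)-α-1 = -α from by ring]
    field_simp
  · rw [hI0, hsplit]
    simp only [omegaK, show (2:ℝ)-α-1 = 1-α from by ring, hΓ2]
    rw [hsplit]
    field_simp
end

section
/- Define η_{n−k}^{(n)} := (2/τ_k)∫_{t_{k−1}}^{t_k} ((s − t_{k−1/2})/τ_k) ω_{1−α}(t_n − s) ds where t_{k−1/2} := (t_k + t_{k−1})/2. Then integration by parts gives η_{n−k}^{(n)} = −(1/τ_k²)∫_{t_{k−1}}^{t_k} (s − t_{k−1})(t_k − s) ω_{−α}(t_n − s) ds, and in particular η_{n−k}^{(n)} > 0 for 1 ≤ k ≤ n, since ω_{−α}(t) = t^{−1−α}/Γ(−α) < 0 for t > 0 when α ∈ (0,1). -/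
section aux

variable {a b T α : ℝ}

private lemma rpow_cont (p : ℝ) (hp : 0 ≤ p) : Continuous (fun x : ℝ => x ^ p) :=
  continuous_iff_continuousAt.2 fun x => Real.continuousAt_rpow_const x p (Or.inr hp)

private lemma intTs (hab : a < b) (hbT : b ≤ T) (hα0 : 0 < α) (hα1 : α < 1) :
    IntervalIntegrable (fun s => (T - s) ^ (-α)) MeasureTheory.volume a b := by
  have h := (intervalIntegral.intervalIntegrable_rpow' (a := T - a) (b := T - b) (r := -α)
    (by linarith)).comp_sub_left T
  simpa using h

private lemma intPart2 (hab : a < b) (hbT : b ≤ T) (hα0 : 0 < α) (hα1 : α < 1) :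
    IntervalIntegrable (fun s => (s - a) * (b - s) * (T - s) ^ (-α - 1))
      MeasureTheory.volume a b := by
  rcases eq_or_lt_of_le hbT with hEq | hlt
  · subst hEq
    have hbase : IntervalIntegrable (fun s => (b - s) ^ (-α)) MeasureTheory.volume a b := by
      have h := (intervalIntegral.intervalIntegrable_rpow' (a := b - a) (b := b - b) (r := -α)
        (by linarith)).comp_sub_left b
      simpa using h
    have h2 : IntervalIntegrable (fun s => (s - a) * (b - s) ^ (-α))
        MeasureTheory.volume a b :=
      hbase.continuousOn_mul (by fun_prop)
    rw [intervalIntegrable_iff] at h2 ⊢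
    refine h2.congr_fun (fun s hs => ?_) measurableSet_Ioc
    rw [Set.uIoc_of_le hab.le] at hs
    rcases eq_or_lt_of_le hs.2 with h | h
    · subst h
      simp [Real.zero_rpow (by linarith : -α ≠ 0),
        Real.zero_rpow (by linarith : -α - 1 ≠ 0)]
    · have hbs : b - s ≠ 0 := by linarith
      have : (b - s) ^ (-α) = (b - s) ^ (-α - 1) * (b - s) := by
        rw [← Real.rpow_add_one hbs (-α - 1)]; ring_nf
      beta_reduce; rw [this]; ring
  · apply ContinuousOn.intervalIntegrable
    apply ContinuousOn.mul (by fun_prop)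
    intro s hs
    rw [Set.uIcc_of_le hab.le] at hs
    have hTs : T - s ≠ 0 := by intro h; linarith [hs.2]
    exact ((Real.continuousAt_rpow_const (T - s) (-α - 1) (Or.inl hTs)).comp
      ((continuous_const.sub continuous_id).continuousAt)).continuousWithinAt

private lemma intPart1 (hab : a < b) (hbT : b ≤ T) (hα0 : 0 < α) (hα1 : α < 1) :
    IntervalIntegrable (fun s => (a + b - 2 * s) * (T - s) ^ (-α))
      MeasureTheory.volume a b :=
  (intTs hab hbT hα0 hα1).continuousOn_mul (by fun_prop)

/-- integration by parts identity -/
private lemma key (hab : a < b) (hbT : b ≤ T) (hα0 : 0 < α) (hα1 : α < 1) :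
    ∫ s in a..b, (a + b - 2 * s) * (T - s) ^ (-α)
      = -α * ∫ s in a..b, (s - a) * (b - s) * (T - s) ^ (-α - 1) := by
  set G : ℝ → ℝ := fun s => (s - a) * (b - s) * (T - s) ^ (-α) with hG
  have hderiv : ∀ s ∈ Set.Ioo a b, HasDerivAt G
      ((a + b - 2 * s) * (T - s) ^ (-α)
        + α * ((s - a) * (b - s) * (T - s) ^ (-α - 1))) s := by
    intro s hs
    have hTs : T - s ≠ 0 := by intro h; linarith [hs.2]
    have h1 := ((hasDerivAt_id s).sub_const a).mul
      ((hasDerivAt_const s b).sub (hasDerivAt_id s))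
    simp only [id_eq, Pi.mul_def, Pi.sub_def] at h1
    have h1' : HasDerivAt (fun s : ℝ => (s - a) * (b - s)) (a + b - 2 * s) s := by
      exact h1.congr_deriv (by ring)
    have h2 := ((hasDerivAt_const s T).sub (hasDerivAt_id s)).rpow_const
      (p := -α) (Or.inl hTs)
    simp only [id_eq, Pi.sub_def] at h2
    have h2' : HasDerivAt (fun s : ℝ => (T - s) ^ (-α)) (α * (T - s) ^ (-α - 1)) s := by
      exact h2.congr_deriv (by ring)
    exact (h1'.mul h2').congr_deriv (by ring)
  have hcont : ContinuousOn G (Set.Icc a b) := by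
    rcases eq_or_lt_of_le hbT with hEq | hlt
    · subst hEq
      have hc : Continuous fun s : ℝ => (s - a) * (b - s) ^ (1 - α) := by
        exact (continuous_id.sub continuous_const).mul
          ((rpow_cont (1 - α) (by linarith)).comp (continuous_const.sub continuous_id))
      refine ContinuousOn.congr hc.continuousOn fun s hs => ?_
      rcases eq_or_lt_of_le hs.2 with h | h
      · subst h
        simp [hG, Real.zero_rpow (by linarith : (1:ℝ) - α ≠ 0)]
      · have hbs : b - s ≠ 0 := by linarith
        have : (b - s) ^ (1 - α) = (b - s) ^ (-α) * (b - s) := by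
          rw [← Real.rpow_add_one hbs (-α)]; ring_nf
        simp only [hG]; rw [this]; ring
    · apply ContinuousOn.mul (by fun_prop)
      intro s hs
      have hTs : T - s ≠ 0 := by intro h; linarith [hs.2]
      exact ((Real.continuousAt_rpow_const (T - s) (-α) (Or.inl hTs)).comp
        ((continuous_const.sub continuous_id).continuousAt)).continuousWithinAt
  have hint : IntervalIntegrable (fun s => (a + b - 2 * s) * (T - s) ^ (-α)
      + α * ((s - a) * (b - s) * (T - s) ^ (-α - 1))) MeasureTheory.volume a b :=
    (intPart1 hab hbT hα0 hα1).add ((intPart2 hab hbT hα0 hα1).const_mul α)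
  have hFTC := intervalIntegral.integral_eq_sub_of_hasDerivAt_of_le hab.le hcont hderiv hint
  have hGa : G a = 0 := by simp [hG]
  have hGb : G b = 0 := by simp [hG]
  rw [hGa, hGb, sub_zero,
    intervalIntegral.integral_add (intPart1 hab hbT hα0 hα1)
      ((intPart2 hab hbT hα0 hα1).const_mul α),
    intervalIntegral.integral_const_mul] at hFTC
  linarith

end aux

/-- Integration-by-parts identity and positivity of η_{n−k}^{(n)}:
η_{n−k}^{(n)} = −(1/τ_k²)∫ (s−t_{k−1})(t_k−s)ω_{−α}(t_n−s)ds > 0 for 1 ≤ k ≤ n. -/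
theorem stmt_9 (n : ℕ) (hn : 1 ≤ n) (t : ℕ → ℝ) (ht0 : t 0 = 0)
    (hmono : ∀ k, k < n → t k < t (k+1))
    (α : ℝ) (hα : α ∈ Set.Ioo (0:ℝ) 1)
    (k : ℕ) (hk1 : 1 ≤ k) (hkn : k ≤ n) :
    (2 / (t k - t (k-1))) *
        (∫ s in (t (k-1))..(t k),
          ((s - (t k + t (k-1))/2) / (t k - t (k-1))) * omegaK (1 - α) (t n - s))
      = -(1 / (t k - t (k-1))^2) *
        (∫ s in (t (k-1))..(t k),
          (s - t (k-1)) * (t k - s) * omegaK (-α) (t n - s)) ∧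
    0 < (2 / (t k - t (k-1))) *
        (∫ s in (t (k-1))..(t k),
          ((s - (t k + t (k-1))/2) / (t k - t (k-1))) * omegaK (1 - α) (t n - s)) := by
  obtain ⟨hα0, hα1⟩ := hα
  set a := t (k-1) with hadef
  set b := t k with hbdef
  set T := t n with hTdef
  have hab : a < b := by
    have := hmono (k-1) (by omega)
    rwa [show k - 1 + 1 = k by omega] at this
  have hbT : b ≤ T := by
    have step : ∀ j, k ≤ j → j ≤ n → t k ≤ t j := by
      intro j
      induction j with
      | zero => intro h1 _; omega
      | succ m ih =>
        intro h1 h2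
        rcases Nat.lt_or_ge m k with h | h
        · have : k = m + 1 := by omega
          rw [← this]
        · exact le_trans (ih h (by omega)) (le_of_lt (hmono m (by omega)))
    exact step n hkn le_rfl
  have hτ : (0:ℝ) < b - a := by linarith
  have hτne : b - a ≠ 0 := ne_of_gt hτ
  have hΓ1 : (0:ℝ) < Real.Gamma (1 - α) := Real.Gamma_pos_of_pos (by linarith)
  have hΓm : Real.Gamma (-α) ≠ 0 := by
    apply Real.Gamma_ne_zero
    intro m h
    have hm : α = (m : ℝ) := by linarith [neg_eq_iff_eq_neg.mp h]
    rcases Nat.eq_zero_or_pos m with h0 | h0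
    · rw [h0] at hm; simp at hm; linarith
    · have : (1:ℝ) ≤ (m:ℝ) := by exact_mod_cast h0
      linarith
  have hΓrel : Real.Gamma (1 - α) = -α * Real.Gamma (-α) := by
    have := Real.Gamma_add_one (s := -α) (by linarith)
    rw [show -α + 1 = 1 - α by ring] at this
    exact this
  -- rewrite the two integrals
  have hI1 : (∫ s in a..b, ((s - (b + a)/2) / (b - a)) * omegaK (1 - α) (T - s))
      = (-(1 / (2 * (b - a) * Real.Gamma (1 - α))))
        * ∫ s in a..b, (a + b - 2 * s) * (T - s) ^ (-α) := by
    rw [← intervalIntegral.integral_const_mul]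
    apply intervalIntegral.integral_congr
    intro s _
    unfold omegaK
    rw [show (1 : ℝ) - α - 1 = -α by ring]
    field_simp
    ring
  have hI2 : (∫ s in a..b, (s - a) * (b - s) * omegaK (-α) (T - s))
      = (1 / Real.Gamma (-α))
        * ∫ s in a..b, (s - a) * (b - s) * (T - s) ^ (-α - 1) := by
    rw [← intervalIntegral.integral_const_mul]
    apply intervalIntegral.integral_congr
    intro s _
    unfold omegaK
    ring
  have hkey := key hab hbT hα0 hα1
  set I := ∫ s in a..b, (s - a) * (b - s) * (T - s) ^ (-α - 1) with hIdef
  have hIpos : 0 < I := by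
    apply intervalIntegral.intervalIntegral_pos_of_pos_on
      (intPart2 hab hbT hα0 hα1)
    · intro s hs
      have h1 : 0 < s - a := by linarith [hs.1]
      have h2 : 0 < b - s := by linarith [hs.2]
      have hTs : 0 < T - s := by linarith
      exact mul_pos (mul_pos h1 h2) (Real.rpow_pos_of_pos hTs _)
    · exact hab
  constructor
  · rw [hI1, hI2, hkey, hΓrel]
    have hαne : α ≠ 0 := ne_of_gt hα0
    field_simp
  · rw [hI1, hkey]
    have : (2 / (b - a)) * ((-(1 / (2 * (b - a) * Real.Gamma (1 - α)))) * (-α * I))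
        = (α * I) / ((b - a)^2 * Real.Gamma (1 - α)) := by
      field_simp
    rw [this]
    exact div_pos (mul_pos hα0 hIpos) (mul_pos (pow_pos hτ 2) hΓ1)
end

section
/- With η as above and step ratios r_{k+1} := τ_{k+1}/τ_k, one has η_{n−k−1}^{(n)} > r_{k+1} η_{n−k}^{(n)} for 1 ≤ k ≤ n−1. -/
open MeasureTheory
set_option maxHeartbeats 1000000


/-- η_{m−k}^{(m)} in its integration-by-parts form. -/
noncomputable def etaF (α : ℝ) (t : ℕ → ℝ) (m k : ℕ) : ℝ :=
  -(1 / (t k - t (k-1))^2) *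
    ∫ s in (t (k-1))..(t k), (s - t (k-1)) * (t k - s) * omegaK (-α) (t m - s)

lemma eta_eq (α : ℝ) (t : ℕ → ℝ) (m k : ℕ) :
    etaF α t m k = -(1 / (t k - t (k-1))^2) *
      ((∫ s in (t (k-1))..(t k), (s - t (k-1)) * (t k - s) * (t m - s) ^ (-α - 1)) /
        Real.Gamma (-α)) := by
  rw [etaF, ← intervalIntegral.integral_div]
  congr 1
  apply intervalIntegral.integral_congr
  intro x hx
  simp [omegaK, mul_div_assoc]

/-- η_{n−k−1}^{(n)} > r_{k+1} η_{n−k}^{(n)} for 1 ≤ k ≤ n−1, where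
r_{k+1} := τ_{k+1}/τ_k. -/
theorem stmt_11 (n : ℕ) (hn : 2 ≤ n) (t : ℕ → ℝ) (ht0 : t 0 = 0)
    (hmono : ∀ k, k < n → t k < t (k+1))
    (α : ℝ) (hα : α ∈ Set.Ioo (0:ℝ) 1)
    (k : ℕ) (hk1 : 1 ≤ k) (hkn : k ≤ n - 1) :
    ((t (k+1) - t k) / (t k - t (k-1))) * etaF α t n k < etaF α t n (k+1) := by
  obtain ⟨hα0, hα1⟩ := hα
  have hkn' : k < n := by omega
  have hk'' : k - 1 + 1 = k := by omega
  have key : ∀ j, j ≤ n → ∀ i, i < j → t i < t j := by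
    intro j
    induction j with
    | zero => intro _ i hi; omega
    | succ m ih =>
      intro hm i hi
      rcases Nat.lt_succ_iff_lt_or_eq.mp hi with h | h
      · exact (ih (by omega) i h).trans (hmono m (by omega))
      · subst h; exact hmono i (by omega)
  have hab : t (k-1) < t k := by
    have := hmono (k-1) (by omega); rwa [hk''] at this
  have hbc : t k < t (k+1) := hmono k hkn'
  have hbT : t k < t n := key n le_rfl k hkn'
  have hcT : t (k+1) ≤ t n := by
    rcases (by omega : k + 1 = n ∨ k + 1 < n) with h | h
    · exact le_of_eq (by rw [h])
    · exact (key n le_rfl (k+1) h).le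
  have hΓ : Real.Gamma (-α) < 0 := by
    have h1 : (0:ℝ) < Real.Gamma (-α + 1) :=
      Real.Gamma_pos_of_pos (by linarith)
    rw [Real.Gamma_add_one (show (-α:ℝ) ≠ 0 by
      exact (show (-α:ℝ) < 0 by linarith).ne)] at h1
    by_contra h
    push_neg at h
    have : -α * Real.Gamma (-α) ≤ 0 :=
      mul_nonpos_of_nonpos_of_nonneg (by linarith) h
    linarith
  rw [eta_eq, eta_eq]
  simp only [Nat.add_sub_cancel]
  set a := t (k-1) with ha_def
  set b := t k with hb_def
  set c := t (k+1) with hc_def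
  set T := t n with hT_def
  set Γv := Real.Gamma (-α) with hΓdef
  have hba : (0:ℝ) < b - a := by linarith
  have hcb : (0:ℝ) < c - b := by linarith
  set r := (c - b) / (b - a) with hrdef
  have hr : 0 < r := div_pos hcb hba
  set d := b - r * a with hddef
  have hra : r * a + d = b := by rw [hddef]; ring
  have hrc : r * b + d = c := by
    rw [hddef, hrdef]; field_simp; ring
  have hαlt : (-α - 1 : ℝ) < 0 := by linarith
  have hφ1 : ∀ x : ℝ, a < x → b < r * x + d := by
    intro x hx
    have h0 : 0 < r * (x - a) := mul_pos hr (by linarith)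
    rw [hddef]; nlinarith
  have hφ2 : ∀ x : ℝ, x < b → r * x + d < c := by
    intro x hx
    have h0 : 0 < r * (b - x) := mul_pos hr (by linarith)
    rw [← hrc]; nlinarith
  -- integrability of the two integrands on [a, b]
  have IA : IntervalIntegrable (fun s : ℝ => (s - a) * (b - s) * (T - s) ^ (-α - 1))
      volume a b := by
    apply ContinuousOn.intervalIntegrable
    apply ContinuousOn.mul (by fun_prop)
    apply ContinuousOn.rpow_const (by fun_prop)
    intro x hx
    left
    rw [Set.uIcc_of_le hab.le] at hx
    have : x < T := lt_of_le_of_lt hx.2 hbT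
    exact sub_ne_zero.mpr (by linarith)
  have IB : IntervalIntegrable
      (fun x : ℝ => (x - a) * (b - x) * (T - (r * x + d)) ^ (-α - 1)) volume a b := by
    rcases lt_or_eq_of_le hcT with hlt | heq
    · apply ContinuousOn.intervalIntegrable
      apply ContinuousOn.mul (by fun_prop)
      apply ContinuousOn.rpow_const (by fun_prop)
      intro x hx
      left
      rw [Set.uIcc_of_le hab.le] at hx
      have h1 : r * x + d ≤ r * b + d := by nlinarith [hx.2, hr.le]
      rw [hrc] at h1
      have h2 : r * x + d < T := lt_of_le_of_lt h1 hlt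
      exact sub_ne_zero.mpr (by linarith)
    · -- c = T : endpoint singularity
      have hid : ∀ x : ℝ, T - (r * x + d) = r * (b - x) := by
        intro x; rw [← heq, ← hrc]; ring
      simp only [hid]
      have base : IntervalIntegrable (fun x : ℝ => (b - x) ^ (-α)) volume a b := by
        have h0 : IntervalIntegrable (fun x : ℝ => x ^ (-α)) volume (b - a) (b - b) :=
          intervalIntegral.intervalIntegrable_rpow' (by linarith)
        simpa using h0.comp_sub_left b
      have Ig : IntervalIntegrable
          (fun x : ℝ => ((x - a) * r ^ (-α - 1)) * (b - x) ^ (-α)) volume a b :=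
        base.continuousOn_mul (by fun_prop)
      rw [intervalIntegrable_iff_integrableOn_Ioc_of_le hab.le]
      rw [intervalIntegrable_iff_integrableOn_Ioc_of_le hab.le] at Ig
      apply Ig.congr_fun _ measurableSet_Ioc
      intro x hx
      rcases hx.2.eq_or_lt with h | h
      · subst h
        simp [Real.zero_rpow (show (-α:ℝ) ≠ 0 from (show (-α:ℝ) < 0 by linarith).ne)]
      · have hbx : (0:ℝ) < b - x := by linarith
        have h1 : (b - x) ^ ((1:ℝ) + (-α - 1)) = (b - x) ^ (1:ℝ) * (b - x) ^ (-α - 1) :=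
          Real.rpow_add hbx 1 (-α - 1)
        rw [Real.rpow_one, show (1:ℝ) + (-α - 1) = -α by ring] at h1
        beta_reduce
        rw [h1, Real.mul_rpow hr.le hbx.le]; ring
  set FA := ∫ s in a..b, (s - a) * (b - s) * (T - s) ^ (-α - 1) with hFA
  set FB := ∫ x in a..b, (x - a) * (b - x) * (T - (r * x + d)) ^ (-α - 1) with hFB
  have hFAB : FA < FB := by
    have hpos : 0 < FB - FA := by
      rw [hFA, hFB, ← intervalIntegral.integral_sub IB IA]
      apply intervalIntegral.intervalIntegral_pos_of_pos_on (IB.sub IA) _ hab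
      intro x hx
      have h1 : b < r * x + d := hφ1 x hx.1
      have h2 : r * x + d < c := hφ2 x hx.2
      have h3 : (0:ℝ) < T - (r * x + d) := by linarith
      have h4 : T - (r * x + d) < T - x := by
        have := hx.2; linarith
      have h5 := Real.rpow_lt_rpow_of_neg h3 h4 hαlt
      have h6 : (0:ℝ) < (x - a) * (b - x) :=
        mul_pos (by linarith [hx.1]) (by linarith [hx.2])
      nlinarith [mul_pos h6 (sub_pos.mpr h5)]
    linarith
  -- substitution: the integral over [b, c] equals r^3 * FB
  have h1 := intervalIntegral.smul_integral_comp_mul_add (a := a) (b := b)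
    (fun s : ℝ => (s - b) * (c - s) * (T - s) ^ (-α - 1)) r d
  rw [hra, hrc] at h1
  beta_reduce at h1
  have h2 : (∫ x in a..b,
      (r * x + d - b) * (c - (r * x + d)) * (T - (r * x + d)) ^ (-α - 1)) = r ^ 2 * FB := by
    rw [hFB, ← intervalIntegral.integral_const_mul]
    apply intervalIntegral.integral_congr
    intro x _
    beta_reduce
    have e1 : r * x + d - b = r * (x - a) := by rw [hddef]; ring
    have e2 : c - (r * x + d) = r * (b - x) := by rw [← hrc]; ring
    rw [e1, e2]; ring
  rw [h2, smul_eq_mul] at h1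
  have hFp : (∫ s in b..c, (s - b) * (c - s) * (T - s) ^ (-α - 1)) = r ^ 3 * FB := by
    rw [← h1]; ring
  rw [hFp]
  have hC : 0 < -((c - b) / ((b - a) ^ 3 * Γv)) := by
    have hden : (b - a) ^ 3 * Γv < 0 := mul_neg_of_pos_of_neg (by positivity) hΓ
    have := div_neg_of_pos_of_neg hcb hden
    linarith
  have hL : (c - b) / (b - a) * (-(1 / (b - a) ^ 2) * (FA / Γv))
      = -((c - b) / ((b - a) ^ 3 * Γv)) * FA := by
    field_simp [hba.ne', hΓ.ne]
  have hR : -(1 / (c - b) ^ 2) * (r ^ 3 * FB / Γv)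
      = -((c - b) / ((b - a) ^ 3 * Γv)) * FB := by
    rw [hrdef]
    field_simp [hba.ne', hcb.ne', hΓ.ne]
  calc (c - b) / (b - a) * (-(1 / (b - a) ^ 2) * (FA / Γv))
      = -((c - b) / ((b - a) ^ 3 * Γv)) * FA := hL
    _ < -((c - b) / ((b - a) ^ 3 * Γv)) * FB := mul_lt_mul_of_pos_left hFAB hC
    _ = -(1 / (c - b) ^ 2) * (r ^ 3 * FB / Γv) := hR.symm
end

section
/- For 1 ≤ k ≤ n, the difference I_{n−k}^{(n)} − η_{n−k}^{(n)} equals −(1/τ_k²)∫_{t_{k−1}}^{t_k}(t_k − t)² ω_{−α}(t_n − t) dt, which is positive; hence I_{n−k}^{(n)} > η_{n−k}^{(n)}. -/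
open MeasureTheory Set intervalIntegral


/-- I_{m−k}^{(m)} := ∫ ((s−t_k)/τ_k) ω_{−α}(t_m − s) ds. -/
noncomputable def Ibridge (α : ℝ) (t : ℕ → ℝ) (m k : ℕ) : ℝ :=
  ∫ s in (t (k-1))..(t k), ((s - t k) / (t k - t (k-1))) * omegaK (-α) (t m - s)

lemma aux_intble {a b T α : ℝ} (hab : a < b) (hbT : b ≤ T) (hα0 : 0 < α) (hα1 : α < 1)
    (hG : Real.Gamma (-α) < 0)
    (p : ℝ → ℝ) (hp : Measurable p) {c : ℝ}
    (hpc : ∀ s ∈ Set.Ioc a b, |p s| ≤ c * (T - s)) :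
    IntervalIntegrable (fun s => p s * omegaK (-α) (T - s)) volume a b := by
  have hGne : |Real.Gamma (-α)| > 0 := abs_pos.mpr hG.ne
  have hbase : IntervalIntegrable (fun x : ℝ => x ^ (-α)) volume (T - a) (T - b) :=
    intervalIntegrable_rpow' (by linarith)
  have hcomp : IntervalIntegrable (fun s : ℝ => (T - s) ^ (-α)) volume a b := by
    have := hbase.comp_sub_left T
    simpa using this
  have hC : IntervalIntegrable (fun s : ℝ => (c / |Real.Gamma (-α)|) * (T - s) ^ (-α))
      volume a b := hcomp.const_mul _
  apply hC.mono_fun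
  · apply Measurable.aestronglyMeasurable
    apply hp.mul
    unfold omegaK
    fun_prop
  · filter_upwards [MeasureTheory.ae_restrict_mem measurableSet_uIoc] with s hs
    rw [Set.uIoc_of_le hab.le] at hs
    have hsb : s ≤ b := hs.2
    have hsa : a < s := hs.1
    have hsT : s ≤ T := le_trans hsb hbT
    rcases eq_or_lt_of_le hsT with hsT' | hsT'
    · -- s = T, both sides are 0
      have : T - s = 0 := by linarith
      simp only [this, omegaK]
      rw [Real.zero_rpow (by intro h; rw [sub_eq_zero] at h; linarith),
          Real.zero_rpow (by linarith : (-α : ℝ) ≠ 0)]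
      simp
    · have hx : 0 < T - s := by linarith
      have hω : |omegaK (-α) (T - s)| = (T - s) ^ (-α - 1) / |Real.Gamma (-α)| := by
        unfold omegaK
        rw [abs_div, abs_of_nonneg (Real.rpow_nonneg hx.le _)]
      have hrpow : (T - s) * (T - s) ^ (-α - 1) = (T - s) ^ (-α) := by
        have h1 := Real.rpow_add hx 1 (-α - 1)
        rw [Real.rpow_one] at h1
        rw [← h1]; norm_num
      have hb1 : |p s * omegaK (-α) (T - s)| ≤
          (c * (T - s)) * ((T - s) ^ (-α - 1) / |Real.Gamma (-α)|) := by
        rw [abs_mul, hω]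
        exact mul_le_mul_of_nonneg_right (hpc s hs)
          (div_nonneg (Real.rpow_nonneg hx.le _) hGne.le)
      calc ‖p s * omegaK (-α) (T - s)‖ ≤
            (c * (T - s)) * ((T - s) ^ (-α - 1) / |Real.Gamma (-α)|) := hb1
        _ = ‖(c / |Real.Gamma (-α)|) * (T - s) ^ (-α)‖ := by
            rw [← hrpow]
            rw [Real.norm_eq_abs, abs_mul]
            rw [abs_div]
            have h2 : |(T - s) * (T - s) ^ (-α - 1)| =
                (T - s) * (T - s) ^ (-α - 1) :=
              abs_of_nonneg (mul_nonneg hx.le (Real.rpow_nonneg hx.le _))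
            rw [h2, abs_abs]
            have hc : 0 ≤ c := by
              have := hpc s hs
              nlinarith [abs_nonneg (p s)]
            rw [abs_of_nonneg hc]
            field_simp

/-- I_{n−k}^{(n)} − η_{n−k}^{(n)} = −(1/τ_k²)∫(t_k−s)²ω_{−α}(t_n−s)ds > 0
for 1 ≤ k ≤ n. -/
theorem stmt_12 (n : ℕ) (hn : 1 ≤ n) (t : ℕ → ℝ) (ht0 : t 0 = 0)
    (hmono : ∀ k, k < n → t k < t (k+1))
    (α : ℝ) (hα : α ∈ Set.Ioo (0:ℝ) 1)
    (k : ℕ) (hk1 : 1 ≤ k) (hkn : k ≤ n) :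
    Ibridge α t n k - etaF α t n k
      = -(1 / (t k - t (k-1))^2) *
          (∫ s in (t (k-1))..(t k), (t k - s)^2 * omegaK (-α) (t n - s)) ∧
    etaF α t n k < Ibridge α t n k := by
  obtain ⟨hα0, hα1⟩ := hα
  set a := t (k-1) with ha
  set b := t k with hb
  set T := t n with hT
  have hab : a < b := by
    have := hmono (k-1) (by omega)
    rwa [Nat.sub_add_cancel hk1] at this
  have hbT : b ≤ T := by
    have H : ∀ j, k ≤ j → j ≤ n → t k ≤ t j := by
      intro j hkj hjn
      induction j with
      | zero =>
        have : k = 0 := by omega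
        rw [this]
      | succ m ih =>
        rcases Nat.lt_or_ge m k with h | h
        · have : k = m + 1 := by omega
          rw [this]
        · exact le_trans (ih h (by omega)) (hmono m (by omega)).le
    exact H n hkn le_rfl
  have hτ : 0 < b - a := by linarith
  have hG : Real.Gamma (-α) < 0 := by
    have h1 : 0 < Real.Gamma (1 - α) := Real.Gamma_pos_of_pos (by linarith)
    have h2 : Real.Gamma (-α + 1) = -α * Real.Gamma (-α) :=
      Real.Gamma_add_one (by linarith)
    have h3 : (-α + 1 : ℝ) = 1 - α := by ring
    rw [h3] at h2
    nlinarith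
  -- Integrability of the three integrands
  have hI1 : IntervalIntegrable (fun s => ((s - b) / (b - a)) * omegaK (-α) (T - s))
      volume a b := by
    apply aux_intble hab hbT hα0 hα1 hG _ (by fun_prop) (c := 1 / (b - a))
    intro s hs
    rw [abs_div, abs_of_nonneg hτ.le, abs_of_nonpos (by linarith [hs.2] : s - b ≤ 0)]
    rw [div_le_iff₀ hτ]
    have : 1 / (b - a) * (T - s) * (b - a) = T - s := by field_simp
    rw [this]
    linarith [hs.2]
  have hI2 : IntervalIntegrable (fun s => (s - a) * (b - s) * omegaK (-α) (T - s))
      volume a b := by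
    apply aux_intble hab hbT hα0 hα1 hG _ (by fun_prop) (c := b - a)
    intro s hs
    have h1 : 0 ≤ s - a := by linarith [hs.1]
    have h2 : 0 ≤ b - s := by linarith [hs.2]
    rw [abs_of_nonneg (mul_nonneg h1 h2)]
    have : s - a ≤ b - a := by linarith [hs.2]
    nlinarith [hs.1, hs.2]
  have hI3 : IntervalIntegrable (fun s => (b - s)^2 * omegaK (-α) (T - s))
      volume a b := by
    apply aux_intble hab hbT hα0 hα1 hG _ (by fun_prop) (c := b - a)
    intro s hs
    have h2 : 0 ≤ b - s := by linarith [hs.2]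
    rw [abs_of_nonneg (sq_nonneg _)]
    nlinarith [hs.1, hs.2]
  -- The identity
  have hkey : Ibridge α t n k - etaF α t n k
      = -(1 / (b - a)^2) * (∫ s in a..b, (b - s)^2 * omegaK (-α) (T - s)) := by
    unfold Ibridge etaF
    rw [← ha, ← hb, ← hT]
    have e1 : (1 / (b - a)^2) * (∫ s in a..b, (s - a) * (b - s) * omegaK (-α) (T - s))
        = ∫ s in a..b, (1 / (b - a)^2) * ((s - a) * (b - s) * omegaK (-α) (T - s)) :=
      (intervalIntegral.integral_const_mul _ _).symm
    have e2 : -(1 / (b - a)^2) * (∫ s in a..b, (b - s)^2 * omegaK (-α) (T - s))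
        = ∫ s in a..b, -(1 / (b - a)^2) * ((b - s)^2 * omegaK (-α) (T - s)) :=
      (intervalIntegral.integral_const_mul _ _).symm
    have hsum : (∫ s in a..b, ((s - b) / (b - a)) * omegaK (-α) (T - s))
        + (1 / (b - a)^2) * (∫ s in a..b, (s - a) * (b - s) * omegaK (-α) (T - s))
        = -(1 / (b - a)^2) * (∫ s in a..b, (b - s)^2 * omegaK (-α) (T - s)) := by
      rw [e1, e2, ← intervalIntegral.integral_add hI1 (hI2.const_mul _)]
      apply intervalIntegral.integral_congr
      intro s _
      have hne : b - a ≠ 0 := hτ.ne'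
      field_simp
      ring
    linear_combination hsum
  refine ⟨hkey, ?_⟩
  -- Positivity
  have hpos : 0 < ∫ s in a..b, -((b - s)^2 * omegaK (-α) (T - s)) := by
    apply intervalIntegral_pos_of_pos_on hI3.neg _ hab
    intro s hs
    have hx : 0 < T - s := by linarith [hs.2]
    have hω : omegaK (-α) (T - s) < 0 := by
      unfold omegaK
      apply div_neg_of_pos_of_neg (Real.rpow_pos_of_pos hx _) hG
    have hb2 : 0 < (b - s)^2 := by
      have : 0 < b - s := by linarith [hs.2]
      positivity
    simp only [Pi.neg_apply]
    nlinarith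
  have hint : (∫ s in a..b, (b - s)^2 * omegaK (-α) (T - s)) < 0 := by
    rw [intervalIntegral.integral_neg] at hpos; linarith
  have h4 : (0:ℝ) < 1 / (b - a)^2 := by positivity
  nlinarith [hkey]
end

section
/- For 1 ≤ k ≤ n−1, J_{n−k}^{(n)} − 3η_{n−k}^{(n)} = −(3/τ_k²)∫_{t_{k−1}}^{t_k}(t−t_{k−1})(t−t_{k−1}−2τ_k/3)ω_{−α}(t_n−t)dt > 0; i.e., J_{n−k}^{(n)} > 3η_{n−k}^{(n)}. The positivity uses that |ω_{−α}(t_n−t)| is increasing in t and ∫₀¹ s(s−2/3)ds = 0. -/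
/-- J_{m−k}^{(m)} := ∫ ((t_{k−1}−s)/τ_k) ω_{−α}(t_m − s) ds. -/
noncomputable def Jbridge (α : ℝ) (t : ℕ → ℝ) (m k : ℕ) : ℝ :=
  ∫ s in (t (k-1))..(t k), ((t (k-1) - s) / (t k - t (k-1))) * omegaK (-α) (t m - s)

/-- J_{n−k}^{(n)} − 3η_{n−k}^{(n)}
= −(3/τ_k²)∫(s−t_{k−1})(s−t_{k−1}−2τ_k/3)ω_{−α}(t_n−s)ds > 0 for 1 ≤ k ≤ n−1. -/
theorem stmt_13 (n : ℕ) (hn : 2 ≤ n) (t : ℕ → ℝ) (ht0 : t 0 = 0)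
    (hmono : ∀ k, k < n → t k < t (k+1))
    (α : ℝ) (hα : α ∈ Set.Ioo (0:ℝ) 1)
    (k : ℕ) (hk1 : 1 ≤ k) (hkn : k ≤ n - 1) :
    Jbridge α t n k - 3 * etaF α t n k
      = -(3 / (t k - t (k-1))^2) *
          (∫ s in (t (k-1))..(t k),
            (s - t (k-1)) * (s - t (k-1) - 2 * (t k - t (k-1)) / 3)
              * omegaK (-α) (t n - s)) ∧
    3 * etaF α t n k < Jbridge α t n k := by
  obtain ⟨hα0, hα1⟩ := hα
  -- monotonicity chain
  have hmono' : ∀ i j : ℕ, i < j → j ≤ n → t i < t j := by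
    intro i j hij hjn
    induction j with
    | zero => omega
    | succ m ih =>
      rcases Nat.lt_succ_iff_lt_or_eq.mp hij with h | h
      · exact (ih h (by omega)).trans (hmono m (by omega))
      · subst h; exact hmono i (by omega)
  set a := t (k-1) with ha
  set b := t k with hb
  set T := t n with hT
  have hab : a < b := hmono' (k-1) k (by omega) (by omega)
  have hbT : b < T := hmono' k n (by omega) le_rfl
  set τ := b - a with hτdef
  have hτ : 0 < τ := by simp [hτdef]; linarith
  have hΓ : Real.Gamma (-α) < 0 := by
    have h1 : Real.Gamma (-α + 1) = (-α) * Real.Gamma (-α) :=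
      Real.Gamma_add_one (by linarith)
    have h2 : 0 < Real.Gamma (-α + 1) := Real.Gamma_pos_of_pos (by linarith)
    nlinarith
  -- strict monotonicity of the kernel
  have hglt : ∀ s1 s2 : ℝ, s1 < s2 → s2 < T →
      omegaK (-α) (T - s2) < omegaK (-α) (T - s1) := by
    intro s1 s2 h12 h2T
    have hx : (0:ℝ) < T - s2 := by linarith
    have hxy : T - s2 < T - s1 := by linarith
    have hz : -α - 1 < 0 := by linarith
    have := Real.rpow_lt_rpow_of_neg hx hxy hz
    unfold omegaK
    exact div_lt_div_of_neg_of_lt hΓ this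
  -- fun_prop of the kernel
  have hgc : ContinuousOn (fun s => omegaK (-α) (T - s)) (Set.Iic b) := by
    unfold omegaK
    apply ContinuousOn.div_const
    apply ContinuousOn.rpow_const
    · exact (continuous_const.sub continuous_id).continuousOn
    · intro x hx
      left
      have : x ≤ b := hx
      have : 0 < T - x := by linarith
      linarith
  -- integrability of (polynomial) * kernel on subintervals of Iic b
  have hIg : ∀ (p : ℝ → ℝ), Continuous p → ∀ x y : ℝ, x ≤ b → y ≤ b →
      IntervalIntegrable (fun s => p s * omegaK (-α) (T - s)) MeasureTheory.volume x y := by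
    intro p hp x y hx hy
    have hsub : Set.uIcc x y ⊆ Set.Iic b := by
      intro s hs
      rcases Set.mem_uIcc.mp hs with ⟨_, h2⟩ | ⟨_, h2⟩
      · exact Set.mem_Iic.mpr (le_trans h2 hy)
      · exact Set.mem_Iic.mpr (le_trans h2 hx)
    exact (hp.continuousOn.mul (hgc.mono hsub)).intervalIntegrable
  have hI1 : IntervalIntegrable (fun s => ((a - s) / τ) * omegaK (-α) (T - s))
      MeasureTheory.volume a b :=
    hIg _ (by fun_prop) a b hab.le le_rfl
  have hI2 : IntervalIntegrable (fun s => (s - a) * (b - s) * omegaK (-α) (T - s))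
      MeasureTheory.volume a b :=
    hIg _ (by fun_prop) a b hab.le le_rfl
  have hI3 : IntervalIntegrable
      (fun s => (s - a) * (s - a - 2 * τ / 3) * omegaK (-α) (T - s))
      MeasureTheory.volume a b :=
    hIg _ (by fun_prop) a b hab.le le_rfl
  -- Part 1: the identity
  have heq : Jbridge α t n k - 3 * etaF α t n k
      = -(3 / τ^2) *
          (∫ s in a..b, (s - a) * (s - a - 2 * τ / 3) * omegaK (-α) (T - s)) := by
    unfold Jbridge etaF
    rw [← ha, ← hb, ← hT, ← hτdef]
    have step1 : (∫ s in a..b, ((a - s) / τ) * omegaK (-α) (T - s))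
        - 3 * (-(1 / τ^2) * ∫ s in a..b, (s - a) * (b - s) * omegaK (-α) (T - s))
        = (∫ s in a..b, ((a - s) / τ) * omegaK (-α) (T - s))
          + ∫ s in a..b, (3 / τ^2) * ((s - a) * (b - s) * omegaK (-α) (T - s)) := by
      rw [intervalIntegral.integral_const_mul]; ring
    rw [step1, ← intervalIntegral.integral_add hI1 (hI2.const_mul _)]
    rw [← intervalIntegral.integral_const_mul]
    apply intervalIntegral.integral_congr
    intro s _
    have hτne : τ ≠ 0 := ne_of_gt hτ
    have hb' : b = a + τ := by rw [hτdef]; ring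
    field_simp
    rw [hb']
    ring
  refine ⟨heq, ?_⟩
  -- Part 2: positivity
  set c := a + 2 * τ / 3 with hcdef
  have hac : a < c := by rw [hcdef]; linarith
  have hcb : c < b := by
    have : b = a + τ := by rw [hτdef]; ring
    rw [hcdef, this]; linarith
  -- ∫ φ = 0
  have hphi0 : (∫ s in a..b, (s - a) * (s - a - 2 * τ / 3)) = 0 := by
    have h1 : (∫ s in a..b, (s - a) * (s - a - 2 * τ / 3))
        = ∫ u in (a - a)..(b - a), u * (u - 2 * τ / 3) := by
      rw [← intervalIntegral.integral_comp_sub_right (fun u => u * (u - 2 * τ / 3)) a]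
    rw [h1]
    have h2 : a - a = 0 := by ring
    have h3 : b - a = τ := by rw [hτdef]
    rw [h2, h3]
    have h4 : (fun u : ℝ => u * (u - 2 * τ / 3)) = fun u => u^2 - (2 * τ / 3) * u := by
      funext u; ring
    rw [h4, intervalIntegral.integral_sub (by apply Continuous.intervalIntegrable; fun_prop)
      (by apply Continuous.intervalIntegrable; fun_prop),
      intervalIntegral.integral_const_mul, integral_id]
    have h5 : (∫ u in (0:ℝ)..τ, u^2) = τ^3/3 := by
      rw [integral_pow]; norm_num
    rw [h5]; ring
  -- main strict inequality: ∫ φ·g < 0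
  have hneg : (∫ s in a..b, (s - a) * (s - a - 2 * τ / 3) * omegaK (-α) (T - s)) < 0 := by
    set gc := omegaK (-α) (T - c) with hgcdef
    have hIh : ∀ x y : ℝ, x ≤ b → y ≤ b → IntervalIntegrable
        (fun s => (s - a) * (s - a - 2 * τ / 3) * (omegaK (-α) (T - s) - gc))
        MeasureTheory.volume x y := by
      intro x y hx hy
      have h1 := hIg (fun s => (s - a) * (s - a - 2 * τ / 3)) (by fun_prop) x y hx hy
      have h2 : IntervalIntegrable (fun s => (s - a) * (s - a - 2 * τ / 3) * gc)
          MeasureTheory.volume x y := by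
        apply Continuous.intervalIntegrable; fun_prop
      have := h1.sub h2
      convert this using 2 with s
      ring
    have hsplit : (∫ s in a..b, (s - a) * (s - a - 2 * τ / 3) * (omegaK (-α) (T - s) - gc))
        = (∫ s in a..c, (s - a) * (s - a - 2 * τ / 3) * (omegaK (-α) (T - s) - gc))
        + ∫ s in c..b, (s - a) * (s - a - 2 * τ / 3) * (omegaK (-α) (T - s) - gc) :=
      (intervalIntegral.integral_add_adjacent_intervals
        (hIh a c hab.le hcb.le) (hIh c b hcb.le le_rfl)).symm
    have hleft : (∫ s in a..c, (s - a) * (s - a - 2 * τ / 3) * (omegaK (-α) (T - s) - gc)) < 0 := by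
      have hpos : (0:ℝ) < ∫ s in a..c,
          -((s - a) * (s - a - 2 * τ / 3) * (omegaK (-α) (T - s) - gc)) := by
        apply intervalIntegral.intervalIntegral_pos_of_pos_on ((hIh a c hab.le hcb.le).neg)
        · intro x hx
          simp only [Pi.neg_apply]
          obtain ⟨hx1, hx2⟩ := hx
          have hφ : (x - a) * (x - a - 2 * τ / 3) < 0 := by
            apply mul_neg_of_pos_of_neg
            · linarith
            · rw [hcdef] at hx2; linarith
          have hg : 0 < omegaK (-α) (T - x) - gc := by
            rw [hgcdef]
            have := hglt x c hx2 (by linarith)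
            linarith
          nlinarith
        · exact hac
      have : (∫ s in a..c, -((s - a) * (s - a - 2 * τ / 3) * (omegaK (-α) (T - s) - gc)))
          = -(∫ s in a..c, (s - a) * (s - a - 2 * τ / 3) * (omegaK (-α) (T - s) - gc)) :=
        intervalIntegral.integral_neg
      linarith [hpos, this ▸ hpos]
    have hright : (∫ s in c..b, (s - a) * (s - a - 2 * τ / 3) * (omegaK (-α) (T - s) - gc)) ≤ 0 := by
      have hnn : (0:ℝ) ≤ ∫ s in c..b,
          -((s - a) * (s - a - 2 * τ / 3) * (omegaK (-α) (T - s) - gc)) := by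
        apply intervalIntegral.integral_nonneg hcb.le
        intro u hu
        obtain ⟨hu1, hu2⟩ := hu
        have hφ : 0 ≤ (u - a) * (u - a - 2 * τ / 3) := by
          apply mul_nonneg
          · rw [hcdef] at hu1; linarith
          · rw [hcdef] at hu1; linarith
        have hg : omegaK (-α) (T - u) - gc ≤ 0 := by
          rcases eq_or_lt_of_le hu1 with h | h
          · rw [hgcdef, ← h]; linarith
          · rw [hgcdef]
            have := hglt c u h (by linarith)
            linarith
        nlinarith
      have heqn : (∫ s in c..b, -((s - a) * (s - a - 2 * τ / 3) * (omegaK (-α) (T - s) - gc)))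
          = -(∫ s in c..b, (s - a) * (s - a - 2 * τ / 3) * (omegaK (-α) (T - s) - gc)) :=
        intervalIntegral.integral_neg
      linarith [heqn ▸ hnn]
    have hIgcφ : IntervalIntegrable (fun s => gc * ((s - a) * (s - a - 2 * τ / 3)))
        MeasureTheory.volume a b := by
      apply Continuous.intervalIntegrable; fun_prop
    have hdecomp : (∫ s in a..b, (s - a) * (s - a - 2 * τ / 3) * omegaK (-α) (T - s))
        = (∫ s in a..b, (s - a) * (s - a - 2 * τ / 3) * (omegaK (-α) (T - s) - gc))
          + gc * ∫ s in a..b, (s - a) * (s - a - 2 * τ / 3) := by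
      rw [← intervalIntegral.integral_const_mul,
        ← intervalIntegral.integral_add (hIh a b hab.le le_rfl) hIgcφ]
      apply intervalIntegral.integral_congr
      intro s _
      simp only
      ring
    rw [hdecomp, hphi0, mul_zero, add_zero, hsplit]
    linarith
  have hfinal : 0 < -(3 / τ^2) *
      (∫ s in a..b, (s - a) * (s - a - 2 * τ / 3) * omegaK (-α) (T - s)) := by
    apply mul_pos_of_neg_of_neg _ hneg
    have : 0 < 3 / τ^2 := by positivity
    linarith
  linarith [heq, hfinal]
end

section
/- For every α ∈ (0,1), the function g₅(z,α) := (α/(2−α))·((z+1)^{2−α} − z^{2−α}) − α(z+1)^{1−α} + (α(1−α)/(2−α))·(z+1) satisfies g₅(0,α) = 0 and ∂_z g₅(z,α) > 0 for z > 0; hence g₅(z,α) > 0 for all z > 0. -/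
open Real Set

private lemma key_ineq (α : ℝ) (h0 : 0 < α) (h1 : α < 1) (z : ℝ) (hz : 0 < z) :
    (1 - α) * (z + 1) ^ (-α) ≤ (z + 1) ^ (1 - α) - z ^ (1 - α) := by
  have hz1 : (0:ℝ) < z + 1 := by linarith
  obtain ⟨c, hc, hceq⟩ := exists_hasDerivAt_eq_slope (fun t => t ^ (1 - α))
    (fun t => (1 - α) * t ^ (-α)) (by linarith : z < z + 1)
    (by
      apply ContinuousOn.rpow_const continuousOn_id
      intro x hx
      have hx0 : 0 < x := lt_of_lt_of_le hz hx.1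
      exact Or.inl hx0.ne')
    (by
      intro x hx
      have hx0 : 0 < x := lt_trans hz hx.1
      have := Real.hasDerivAt_rpow_const (p := 1 - α) (Or.inl hx0.ne')
      convert this using 1
      rw [show (1 - α) - 1 = -α by ring])
  have hc0 : 0 < c := lt_trans hz hc.1
  rw [show z + 1 - z = 1 by ring, div_one] at hceq
  rw [← hceq]
  apply mul_le_mul_of_nonneg_left _ (by linarith)
  rw [Real.rpow_neg hz1.le, Real.rpow_neg hc0.le]
  apply inv_anti₀ (Real.rpow_pos_of_pos hc0 α)
  exact Real.rpow_le_rpow hc0.le hc.2.le h0.le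

private lemma g5_hasDeriv (α : ℝ) (h0 : 0 < α) (h1 : α < 1) (z : ℝ) (hz : 0 < z) :
    HasDerivAt (fun z : ℝ =>
      (α / (2 - α)) * ((z + 1) ^ (2 - α) - z ^ (2 - α))
        - α * (z + 1) ^ (1 - α) + (α * (1 - α) / (2 - α)) * (z + 1))
      (α * ((z + 1) ^ (1 - α) - z ^ (1 - α)) - α * (1 - α) * (z + 1) ^ (-α)
        + α * (1 - α) / (2 - α)) z := by
  have hz1 : (0:ℝ) < z + 1 := by linarith
  have h2 : (2:ℝ) - α ≠ 0 := by linarith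
  have hid : HasDerivAt (fun z : ℝ => z + 1) 1 z := (hasDerivAt_id z).add_const 1
  have d1 : HasDerivAt (fun z : ℝ => (z + 1) ^ (2 - α))
      (1 * (2 - α) * (z + 1) ^ ((2 - α) - 1)) z :=
    hid.rpow_const (Or.inl hz1.ne')
  have d2 : HasDerivAt (fun z : ℝ => z ^ (2 - α)) ((2 - α) * z ^ ((2 - α) - 1)) z :=
    Real.hasDerivAt_rpow_const (Or.inl hz.ne')
  have d3 : HasDerivAt (fun z : ℝ => (z + 1) ^ (1 - α))
      (1 * (1 - α) * (z + 1) ^ ((1 - α) - 1)) z :=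
    hid.rpow_const (Or.inl hz1.ne')
  have D := ((((d1.sub d2).const_mul (α / (2 - α))).sub (d3.const_mul α)).add
      (hid.const_mul (α * (1 - α) / (2 - α))))
  refine D.congr_deriv ?_
  rw [show (2:ℝ) - α - 1 = 1 - α by ring, show (1:ℝ) - α - 1 = -α by ring]
  field_simp

/-- g₅(z,α) := (α/(2−α))((z+1)^{2−α} − z^{2−α}) − α(z+1)^{1−α} + (α(1−α)/(2−α))(z+1)
satisfies g₅(0,α) = 0, ∂_z g₅ > 0 on (0,∞), hence g₅(z,α) > 0 for z > 0. -/
theorem stmt_14 (α : ℝ) (hα : α ∈ Set.Ioo (0:ℝ) 1) :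
    (let g5 : ℝ → ℝ := fun z =>
      (α / (2 - α)) * ((z + 1) ^ (2 - α) - z ^ (2 - α))
        - α * (z + 1) ^ (1 - α) + (α * (1 - α) / (2 - α)) * (z + 1)
     g5 0 = 0 ∧ (∀ z : ℝ, 0 < z → 0 < deriv g5 z) ∧ ∀ z : ℝ, 0 < z → 0 < g5 z) := by
  obtain ⟨h0, h1⟩ := hα
  intro g5
  have h2 : (0:ℝ) < 2 - α := by linarith
  have hzero : g5 0 = 0 := by
    show (α / (2 - α)) * ((0 + 1) ^ (2 - α) - (0:ℝ) ^ (2 - α))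
        - α * ((0:ℝ) + 1) ^ (1 - α) + (α * (1 - α) / (2 - α)) * (0 + 1) = 0
    rw [Real.zero_rpow (by linarith), zero_add, Real.one_rpow, Real.one_rpow]
    field_simp
    ring
  have hderivpos : ∀ z : ℝ, 0 < z → 0 < deriv g5 z := by
    intro z hz
    rw [(g5_hasDeriv α h0 h1 z hz).deriv]
    have hk := key_ineq α h0 h1 z hz
    have h3 : 0 < α * (1 - α) / (2 - α) := div_pos (mul_pos h0 (by linarith)) h2
    nlinarith
  refine ⟨hzero, hderivpos, ?_⟩
  have hmono : StrictMonoOn g5 (Ici (0:ℝ)) := by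
    apply strictMonoOn_of_deriv_pos (convex_Ici 0)
    · apply ContinuousOn.add
      apply ContinuousOn.sub
      apply ContinuousOn.mul continuousOn_const
      apply ContinuousOn.sub
      · apply ContinuousOn.rpow_const (by fun_prop)
        intro x hx
        have hx0 : (0:ℝ) ≤ x := hx
        left
        positivity
      · apply ContinuousOn.rpow_const continuousOn_id
        intro x hx
        right; linarith
      · apply ContinuousOn.mul continuousOn_const
        apply ContinuousOn.rpow_const (by fun_prop)
        intro x hx
        have hx0 : (0:ℝ) ≤ x := hx
        left
        positivity
      · fun_prop
    · intro z hz
      rw [interior_Ici] at hz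
      exact hderivpos z hz
  intro z hz
  have := hmono (self_mem_Ici) (le_of_lt hz : (0:ℝ) ≤ z) hz
  rwa [hzero] at this
end

section
/- Let α ∈ (0,1) and fix a step ratio bound. Consider the function ĝ(r) := (2 + 4r − r^{3/2})/(1+r) (the α → 1 limit of g(r,r,α)). The equation 1 + 2r − r^{3/2} = 0 has a unique positive root r★, and r★ > 4.86. -/
/-- rpow 3/2 in terms of sqrt cubed. -/
lemma rpow_three_halves (r : ℝ) (hr : 0 < r) :
    r ^ ((3:ℝ)/2) = (Real.sqrt r) ^ 3 := by
  rw [Real.sqrt_eq_rpow, ← Real.rpow_natCast (r ^ ((1:ℝ)/2)) 3,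
    ← Real.rpow_mul hr.le]
  norm_num

/-- translate the equation to a cubic in t = sqrt r. -/
lemma eq_iff_cubic (r : ℝ) (hr : 0 < r) :
    (1 + 2 * r - r ^ ((3:ℝ)/2) = 0) ↔
    ((Real.sqrt r) ^ 3 - 2 * (Real.sqrt r) ^ 2 - 1 = 0) := by
  rw [rpow_three_halves r hr, Real.sq_sqrt hr.le]
  constructor <;> intro h <;> linarith

lemma cubic_mono {a b : ℝ} (ha : 2 ≤ a) (hab : a < b) :
    a ^ 3 - 2 * a ^ 2 - 1 < b ^ 3 - 2 * b ^ 2 - 1 := by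
  have hb : 2 < b := lt_of_le_of_lt ha hab
  have hfac : 0 < b ^ 2 + a * b + a ^ 2 - 2 * a - 2 * b := by nlinarith
  nlinarith [mul_pos (sub_pos.mpr hab) hfac]

lemma root_gt {t : ℝ} (ht : 0 < t) (h : t ^ 3 - 2 * t ^ 2 - 1 = 0) :
    2.205 < t := by
  have h2 : 2 ≤ t := by nlinarith [sq_nonneg t, sq_nonneg (t - 2)]
  by_contra hle
  push_neg at hle
  nlinarith [sq_nonneg (t - 2), sq_nonneg t]

/-- The equation 1 + 2r − r^{3/2} = 0 has a unique positive root r★, and r★ > 4.86. -/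
theorem stmt_17 :
    (∃! r : ℝ, 0 < r ∧ 1 + 2 * r - r ^ ((3:ℝ)/2) = 0) ∧
    (∀ r : ℝ, 0 < r → 1 + 2 * r - r ^ ((3:ℝ)/2) = 0 → 4.86 < r) := by
  have key : ∀ r : ℝ, 0 < r → 1 + 2 * r - r ^ ((3:ℝ)/2) = 0 → 4.86 < r := by
    intro r hr heq
    have hc := (eq_iff_cubic r hr).mp heq
    have ht : 2.205 < Real.sqrt r := root_gt (Real.sqrt_pos.mpr hr) hc
    have : r = (Real.sqrt r) ^ 2 := (Real.sq_sqrt hr.le).symm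
    nlinarith
  refine ⟨?_, key⟩
  -- existence via IVT for h(t) = t^3 - 2t^2 - 1 on [2.2, 2.3]
  have hcont : ContinuousOn (fun t : ℝ => t ^ 3 - 2 * t ^ 2 - 1)
      (Set.Icc (2.2 : ℝ) 2.3) := by
    fun_prop
  have hmem : (0:ℝ) ∈ Set.Icc ((fun t : ℝ => t ^ 3 - 2 * t ^ 2 - 1) 2.2)
      ((fun t : ℝ => t ^ 3 - 2 * t ^ 2 - 1) 2.3) := by
    constructor <;> norm_num
  obtain ⟨t, htmem, htroot⟩ :=
    intermediate_value_Icc (by norm_num : (2.2:ℝ) ≤ 2.3) hcont hmem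
  obtain ⟨ht1, ht2⟩ := htmem
  have htpos : 0 < t := by linarith
  have hsq : Real.sqrt (t ^ 2) = t := Real.sqrt_sq htpos.le
  refine ⟨t ^ 2, ⟨by positivity, ?_⟩, ?_⟩
  · rw [eq_iff_cubic _ (by positivity), hsq]
    simpa using htroot
  · rintro r ⟨hr, heq⟩
    have hc := (eq_iff_cubic r hr).mp heq
    have hs := Real.sqrt_pos.mpr hr
    have h2r : 2 ≤ Real.sqrt r := by linarith [root_gt hs hc]
    have h2t : 2 ≤ t := by linarith
    have heqt : Real.sqrt r = t := by
      rcases lt_trichotomy (Real.sqrt r) t with h | h | h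
      · have := cubic_mono h2r h
        simp only at htroot
        rw [hc] at this; rw [htroot] at this; linarith
      · exact h
      · have := cubic_mono h2t h
        simp only at htroot
        rw [hc] at this; rw [htroot] at this; linarith
    have : r = (Real.sqrt r) ^ 2 := (Real.sq_sqrt hr.le).symm
    rw [this, heqt]
end
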